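/- arXiv:2404.18484 — 9 statements merged into one kernel-verified Lean document; each statement's English description precedes it below -/
import Mathlib

section
/- Let A be a local finite-dimensional commutative algebra with maximal ideal m, U ⊂ m a hyperplane generating A, and d the maximal integer with m^d ⊄ U. Let π: m → m/U be the projection. Then for any vector-space decomposition m = L ⊕ m^2 and any z = z_L + z_{m^2} with z_L ∈ L, z_{m^2} ∈ m^2, one has π(z^d) = π(z_L^d). -/
/-- Let `(A, U)` be an H-pair: `A` a local finite-dimensional commutative algebra with
maximal ideal `m`, `U ⊂ m` a hyperplane generating `A`, and `d` maximal with `m^d ⊄ U`.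
Then for any vector-space decomposition `m = L ⊕ m²` and any `z = z_L + z_{m²}` with
`z_L ∈ L`, `z_{m²} ∈ m²`, one has `π(z^d) = π(z_L^d)`, i.e. `z^d - z_L^d ∈ U`, where
`π : m → m/U` is the projection. -/
theorem boundary_equation_depends_on_linear_part
    (K A : Type*) [Field K] [CharZero K] [CommRing A] [Algebra K A]
    [FiniteDimensional K A] [IsLocalRing A]
    (U L : Submodule K A) (d : ℕ)
    (hU : U ≤ (IsLocalRing.maximalIdeal A).restrictScalars K)
    (hgen : Algebra.adjoin K (U : Set A) = ⊤)
    (hhyp : Module.finrank K U + 1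
      = Module.finrank K ((IsLocalRing.maximalIdeal A).restrictScalars K))
    (hd : ¬ (IsLocalRing.maximalIdeal A ^ d).restrictScalars K ≤ U)
    (hd1 : (IsLocalRing.maximalIdeal A ^ (d + 1)).restrictScalars K ≤ U)
    (hL : L ≤ (IsLocalRing.maximalIdeal A).restrictScalars K)
    (hdisj : Disjoint L ((IsLocalRing.maximalIdeal A ^ 2).restrictScalars K))
    (hsup : L ⊔ (IsLocalRing.maximalIdeal A ^ 2).restrictScalars K
      = (IsLocalRing.maximalIdeal A).restrictScalars K) :
    ∀ zL ∈ L, ∀ z2 ∈ (IsLocalRing.maximalIdeal A ^ 2).restrictScalars K,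
      (zL + z2) ^ d - zL ^ d ∈ U := by
  intro zL hzL z2 hz2
  apply hd1
  rw [Submodule.restrictScalars_mem] at hz2 ⊢
  have hm : zL ∈ IsLocalRing.maximalIdeal A := hL hzL
  have key : ∀ k ∈ Finset.range d,
      zL ^ k * z2 ^ (d - k) * (d.choose k : A) ∈ IsLocalRing.maximalIdeal A ^ (d + 1) := by
    intro k hk
    rw [Finset.mem_range] at hk
    apply Ideal.mul_mem_right
    have h1 : zL ^ k ∈ IsLocalRing.maximalIdeal A ^ k := Ideal.pow_mem_pow hm k
    have h2 : z2 ^ (d - k) ∈ (IsLocalRing.maximalIdeal A ^ 2) ^ (d - k) :=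
      Ideal.pow_mem_pow hz2 _
    rw [← pow_mul] at h2
    have h3 := Ideal.mul_mem_mul h1 h2
    rw [← pow_add] at h3
    exact Ideal.pow_le_pow_right (by omega) h3
  have hsum : ∑ k ∈ Finset.range d, zL ^ k * z2 ^ (d - k) * (d.choose k : A)
      ∈ IsLocalRing.maximalIdeal A ^ (d + 1) := Submodule.sum_mem _ key
  have heq : (zL + z2) ^ d - zL ^ d
      = ∑ k ∈ Finset.range d, zL ^ k * z2 ^ (d - k) * (d.choose k : A) := by
    rw [add_pow, Finset.sum_range_succ]
    simp
  rw [heq]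
  exact hsum
end

section
/- Let g(z_1,…,z_k) = Σ_{|λ|=d} a_λ z^λ be a nonzero homogeneous polynomial of degree d, fix λ_0 with a_{λ0} ≠ 0, and set b_λ = (a_λ c_{λ0})/(c_λ a_{λ0}) where c_λ = d!/(λ_1!···λ_k!) is the multinomial coefficient. Then in the quotient algebra A = K[x_1,…,x_k]/(x^λ : |λ| = d+1; x^λ − b_λ x^{λ0} : |λ| = d, λ ≠ λ_0), the element (z_1 x_1 + … + z_k x_k)^d equals (c_{λ0}/a_{λ0}) g(z_1,…,z_k) · x^{λ0}. -/
/-!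
By the multinomial theorem, `(∑ zᵢ xᵢ)^d = ∑_{|λ| = d} c_λ z^λ x^λ`. In the quotient
every `x^λ` with `|λ| = d` becomes `b_λ x^{λ₀}` (also for `λ = λ₀`, since `b_{λ₀} = 1`),
and `c_λ b_λ = (c_{λ₀}/a_{λ₀}) a_λ`, so the sum collapses to
`(c_{λ₀}/a_{λ₀}) g(z) x^{λ₀}`.
-/

open MvPolynomial

namespace Finset

lemma mem_finsuppAntidiag_univ {σ : Type*} [Fintype σ] [DecidableEq σ] {d : ℕ}
    {s : σ →₀ ℕ} :
    s ∈ finsuppAntidiag univ d ↔ (s.sum fun _ m => m) = d := by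
  rw [mem_finsuppAntidiag, Finsupp.sum_fintype _ _ fun _ => rfl]
  exact and_iff_left (subset_univ _)

end Finset

namespace MvPolynomial

open Finset

variable {R σ : Type*} [CommSemiring R] [Fintype σ] {d : ℕ}

lemma isHomogeneous_sum_C_mul_X_pow (z : σ → R) (d : ℕ) :
    ((∑ i, C (z i) * X i : MvPolynomial σ R) ^ d).IsHomogeneous d := by
  simpa using (IsHomogeneous.sum _ _ 1 fun i _ => isHomogeneous_C_mul_X (z i) i).pow d

variable [DecidableEq σ]

lemma IsHomogeneous.sum_monomial_coeff {f : MvPolynomial σ R} (hf : f.IsHomogeneous d) :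
    ∑ s ∈ finsuppAntidiag univ d, monomial s (coeff s f) = f := by
  refine (sum_subset (fun s hs => ?_) fun s _ hs => ?_).symm.trans f.as_sum.symm
  · exact mem_finsuppAntidiag_univ.2 (hf.degree_eq_sum_deg_support hs).symm
  · rw [notMem_support_iff.1 hs, monomial_zero]

lemma IsHomogeneous.map_eq_sum_smul {M : Type*} [AddCommMonoid M] [Module R M]
    (φ : MvPolynomial σ R →ₗ[R] M) (b : (σ →₀ ℕ) → R) (m : M)
    (hφ : ∀ s ∈ finsuppAntidiag univ d, φ (monomial s 1) = b s • m)
    {f : MvPolynomial σ R} (hf : f.IsHomogeneous d) :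
    φ f = (∑ s ∈ finsuppAntidiag univ d, coeff s f * b s) • m := by
  conv_lhs => rw [← hf.sum_monomial_coeff]
  rw [map_sum, sum_smul]
  refine sum_congr rfl fun s hs => ?_
  rw [← mul_one (coeff s f), ← smul_eq_mul, ← smul_monomial, map_smul, hφ s hs, smul_smul,
    smul_eq_mul, mul_one]

lemma IsHomogeneous.eval_eq_sum {f : MvPolynomial σ R} (hf : f.IsHomogeneous d) (z : σ → R) :
    eval z f = ∑ s ∈ finsuppAntidiag univ d, coeff s f * s.prod fun i n => z i ^ n := by
  conv_lhs => rw [← hf.sum_monomial_coeff]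
  simp only [map_sum, eval_monomial]

lemma coeff_sum_C_mul_X_pow {z : σ → R} {s : σ →₀ ℕ} (hs : s ∈ finsuppAntidiag univ d) :
    coeff s ((∑ i, C (z i) * X i : MvPolynomial σ R) ^ d) =
      Nat.multinomial univ s * s.prod fun i n => z i ^ n := by
  simp_rw [← smul_eq_C_mul, coeff_linearCombination_X_pow_of_fintype,
    if_pos (mem_finsuppAntidiag_univ.1 hs), Finsupp.multinomial_of_support_subset (subset_univ _)]

end MvPolynomial

theorem power_of_linear_form_in_quotient_general
    (K : Type*) [Field K] [CharZero K] (k d : ℕ)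
    (g : MvPolynomial (Fin k) K) (hhom : g.IsHomogeneous d)
    (lam0 : Fin k →₀ ℕ) (hl0 : coeff lam0 g ≠ 0)
    (b : (Fin k →₀ ℕ) → K)
    (hb : ∀ lam, b lam = (coeff lam g * (Nat.multinomial Finset.univ lam0 : K)) /
      ((Nat.multinomial Finset.univ lam : K) * coeff lam0 g))
    (I : Ideal (MvPolynomial (Fin k) K))
    (hI : I = Ideal.span
      ({q | ∃ lam : Fin k →₀ ℕ, (lam.sum fun _ m => m) = d + 1 ∧ q = monomial lam (1 : K)} ∪
       {q | ∃ lam : Fin k →₀ ℕ, (lam.sum fun _ m => m) = d ∧ lam ≠ lam0 ∧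
          q = monomial lam (1 : K) - C (b lam) * monomial lam0 (1 : K)}))
    (z : Fin k → K) :
    Ideal.Quotient.mk I ((∑ i, C (z i) * X i) ^ d) =
      Ideal.Quotient.mk I
        (C ((Nat.multinomial Finset.univ lam0 : K) / coeff lam0 g * eval z g) *
          monomial lam0 (1 : K)) := by
  classical
  have hc : ∀ s : Fin k →₀ ℕ, (Nat.multinomial Finset.univ s : K) ≠ 0 :=
    fun s => Nat.cast_ne_zero.2 (Nat.multinomial_pos _ _).ne'
  have hrel : ∀ s ∈ Finset.finsuppAntidiag Finset.univ d,
      Ideal.Quotient.mkₐ K I (monomial s 1) = b s • Ideal.Quotient.mkₐ K I (monomial lam0 1) := by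
    intro s hs
    rcases eq_or_ne s lam0 with rfl | hne
    · rw [hb, mul_comm, div_self (mul_ne_zero (hc s) hl0), one_smul]
    · rw [← map_smul, smul_eq_C_mul, Ideal.Quotient.mkₐ_eq_mk, Ideal.Quotient.eq, hI]
      exact Ideal.subset_span (Or.inr ⟨s, Finset.mem_finsuppAntidiag_univ.1 hs, hne, rfl⟩)
  calc Ideal.Quotient.mkₐ K I ((∑ i, C (z i) * X i) ^ d)
      = (∑ s ∈ Finset.finsuppAntidiag Finset.univ d,
            coeff s ((∑ i, C (z i) * X i) ^ d) * b s) • Ideal.Quotient.mkₐ K I (monomial lam0 1) :=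
        (isHomogeneous_sum_C_mul_X_pow z d).map_eq_sum_smul
          (Ideal.Quotient.mkₐ K I).toLinearMap b _ hrel
    _ = ((Nat.multinomial Finset.univ lam0 : K) / coeff lam0 g * eval z g) •
          Ideal.Quotient.mkₐ K I (monomial lam0 1) := by
        rw [hhom.eval_eq_sum, Finset.mul_sum]
        congr 1
        refine Finset.sum_congr rfl fun s hs => ?_
        rw [coeff_sum_C_mul_X_pow hs, hb]
        field_simp [hc s]
    _ = _ := by rw [← map_smul, smul_eq_C_mul]; rfl

/-- Let `g = Σ_{|λ|=d} a_λ z^λ` be a nonzero homogeneous polynomial of degree `d`, fix `λ₀`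
with `a_{λ₀} ≠ 0`, and set `b_λ = (a_λ c_{λ₀})/(c_λ a_{λ₀})` with `c_λ` the multinomial
coefficient. Then in the quotient algebra
`A = K[x_1,…,x_k]/(x^λ : |λ| = d+1; x^λ − b_λ x^{λ₀} : |λ| = d, λ ≠ λ₀)`, the element
`(z_1 x_1 + … + z_k x_k)^d` equals `(c_{λ₀}/a_{λ₀}) g(z_1,…,z_k) · x^{λ₀}`. -/
theorem power_of_linear_form_in_quotient
    (K : Type*) [Field K] [CharZero K] (k d : ℕ) (hd : 1 ≤ d)
    (g : MvPolynomial (Fin k) K) (hg : g ≠ 0) (hhom : g.IsHomogeneous d)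
    (lam0 : Fin k →₀ ℕ) (hl0 : coeff lam0 g ≠ 0)
    (b : (Fin k →₀ ℕ) → K)
    (hb : ∀ lam, b lam = (coeff lam g * (Nat.multinomial Finset.univ lam0 : K)) /
      ((Nat.multinomial Finset.univ lam : K) * coeff lam0 g))
    (I : Ideal (MvPolynomial (Fin k) K))
    (hI : I = Ideal.span
      ({q | ∃ lam : Fin k →₀ ℕ, (lam.sum fun _ m => m) = d + 1 ∧ q = monomial lam (1 : K)} ∪
       {q | ∃ lam : Fin k →₀ ℕ, (lam.sum fun _ m => m) = d ∧ lam ≠ lam0 ∧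
          q = monomial lam (1 : K) - C (b lam) * monomial lam0 (1 : K)}))
    (z : Fin k → K) :
    Ideal.Quotient.mk I ((∑ i, C (z i) * X i) ^ d) =
      Ideal.Quotient.mk I
        (C ((Nat.multinomial Finset.univ lam0 : K) / coeff lam0 g * eval z g) *
          monomial lam0 (1 : K)) :=
  power_of_linear_form_in_quotient_general K k d g hhom lam0 hl0 b hb I hI z
end

section
/- Let Λ be a k-dimensional Young diagram that is non-exceptional, i.e., for every 1 ≤ i ≤ k there exists λ ∈ Λ with λ_i ≠ 0 and λ ≠ e_i. Then the number of precorner cells of Λ is at least k, where a non-corner cell λ ∈ Λ is a precorner cell if for every 1 ≤ i ≤ k, either λ + e_i ∉ Λ or λ + e_i is a corner cell of Λ. -/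
/-!
Precorner cells are the maximal elements of the finite set `S` of non-corner cells. Every
maximal `c ∈ S` has a direction `l` such that everything strictly below `c + e_l` lies in `S`,
and non-exceptionality puts each `e_i` in `S`. For each `i` let `f i` be the maximal element
of `S` that is largest in the lexicographic order reading the coordinates cyclically from `i`;
it attains the largest `i`-th coordinate in `S`, so its exchange direction `l` differs from `i`.
If `f i = f j = c` with `i ≠ j`, moving a unit of `c` from `i` (resp. `j`) to `l` stays in `S`,
and maximality of `c` in the cyclic order from `j` (resp. `i`) forces `l` to come after `i`
starting from `j` and after `j` starting from `i`, which is cyclically impossible. Hence `f` is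
injective.
-/

theorem Pi.toLex_lt_toLex_of_forall_ne_le {ι β : Type*} [LinearOrder ι] [WellFoundedLT ι]
    [PartialOrder β] {x y : ι → β} {a l : ι} (hla : l < a) (hle : ∀ t ≠ a, x t ≤ y t)
    (hlt : x l < y l) : toLex x < toLex y := by
  obtain ⟨p, hp, hmin⟩ := wellFounded_lt.has_min {t | x t ≠ y t} ⟨l, hlt.ne⟩
  have hpl : p ≤ l := not_lt.1 fun h => hmin l hlt.ne h
  exact ⟨p, fun t ht => not_not.1 fun h => hmin t h ht,
    lt_of_le_of_ne (hle p (hpl.trans_lt hla).ne) hp⟩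

theorem Fin.val_sub_lt_val_sub_of_val_sub_le {k : ℕ} {i j l : Fin k} (hij : i ≠ j)
    (h : (i - j).val ≤ (l - j).val) : (l - i).val < (j - i).val := by
  have hsub : ∀ a b : Fin k,
      (a - b).val = if b ≤ a then a.val - b.val else k + a.val - b.val := by
    intro a b
    split_ifs with hab
    · exact Fin.sub_val_of_le hab
    · exact Fin.coe_sub_iff_lt.2 (not_le.1 hab)
  have := i.isLt; have := j.isLt; have := l.isLt
  rw [Fin.ne_iff_vne] at hij
  rw [hsub, hsub] at h ⊢
  split_ifs at h ⊢ <;> simp only [Fin.le_def, not_le] at * <;> omega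

def cyclicLex {k : ℕ} (i : Fin k) (c : Fin k → ℕ) : Lex (Fin k → ℕ) :=
  toLex fun q => c (i + q)

section CyclicLex

variable {k : ℕ} {i : Fin k} {c d : Fin k → ℕ}

theorem apply_le_of_cyclicLex_le (h : cyclicLex i d ≤ cyclicLex i c) : d i ≤ c i := by
  have : NeZero k := ⟨i.pos.ne'⟩
  simpa using Pi.apply_le_of_toLex (i := 0) h fun q hq => absurd hq (Fin.not_lt_zero q)

theorem cyclicLex_lt_of_forall_ne_le {a l : Fin k} (hla : (l - i).val < (a - i).val)
    (hle : ∀ t ≠ a, c t ≤ d t) (hlt : c l < d l) : cyclicLex i c < cyclicLex i d := by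
  have : NeZero k := ⟨i.pos.ne'⟩
  refine Pi.toLex_lt_toLex_of_forall_ne_le (a := a - i) (l := l - i) hla
    (fun q hq => hle _ fun h => hq ?_) (by rwa [add_sub_cancel])
  rw [← h, add_sub_cancel_left]

end CyclicLex

section Exchange

variable {k : ℕ} {S : Set (Fin k → ℕ)}

theorem exists_mem_of_forall_lt_add_single_mem {c : Fin k → ℕ} {j l : Fin k}
    (hS : ∀ x < c + Pi.single l 1, x ∈ S) (hjl : j ≠ l) (hj : c j ≠ 0) :
    ∃ x ∈ S, x l = c l + 1 ∧ ∀ t ≠ j, c t ≤ x t := by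
  refine ⟨c + Pi.single l 1 - Pi.single j 1, hS _ ?_, by simp [hjl.symm], fun t ht => ?_⟩
  · exact Pi.lt_def.2 ⟨fun t => Nat.sub_le _ _, j, by simp [hjl]; omega⟩
  · simp [Pi.single_apply, ht]

theorem apply_le_of_forall_cyclicLex_le (hS : S.Finite) {i : Fin k} {c : Fin k → ℕ}
    (hc : ∀ d, Maximal (· ∈ S) d → cyclicLex i d ≤ cyclicLex i c) {s : Fin k → ℕ}
    (hs : s ∈ S) : s i ≤ c i := by
  obtain ⟨d, hsd, hd⟩ := hS.exists_le_maximal hs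
  exact (hsd i).trans (apply_le_of_cyclicLex_le (hc d hd))

theorem val_sub_le_of_forall_cyclicLex_le (hS : S.Finite) {j : Fin k} {c : Fin k → ℕ}
    (hc : ∀ d, Maximal (· ∈ S) d → cyclicLex j d ≤ cyclicLex j c) {x : Fin k → ℕ}
    {i l : Fin k} (hx : x ∈ S) (hle : ∀ t ≠ i, c t ≤ x t) (hlt : c l < x l) :
    (i - j).val ≤ (l - j).val := by
  obtain ⟨d, hxd, hd⟩ := hS.exists_le_maximal hx
  by_contra! h
  exact (hc d hd).not_gt
    (cyclicLex_lt_of_forall_ne_le h (fun t ht => (hle t ht).trans (hxd t)) (hlt.trans_le (hxd l)))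

theorem le_ncard_maximal_of_exchange (hS : S.Finite) (hpos : ∀ i, ∃ s ∈ S, s i ≠ 0)
    (hexch : ∀ c, Maximal (· ∈ S) c → ∃ l, ∀ x < c + Pi.single l 1, x ∈ S) :
    k ≤ {c | Maximal (· ∈ S) c}.ncard := by
  set M := {c | Maximal (· ∈ S) c}
  have hM : M.Finite := hS.subset fun c hc => hc.prop
  have htop : ∀ i, ∃ c ∈ M, ∀ d ∈ M, cyclicLex i d ≤ cyclicLex i c := fun i => by
    obtain ⟨s, hs, -⟩ := hpos i
    obtain ⟨c, -, hc⟩ := hS.exists_le_maximal hs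
    exact M.exists_max_image (cyclicLex i) hM ⟨c, hc⟩
  choose f hfM hftop using htop
  have hmax : ∀ i, ∀ s ∈ S, s i ≤ f i i := fun i _ =>
    apply_le_of_forall_cyclicLex_le hS (hftop i)
  have hfpos : ∀ i, f i i ≠ 0 := fun i => by
    obtain ⟨s, hs, hsi⟩ := hpos i
    have := hmax i s hs
    omega
  have hunit : ∀ {a b}, a ≠ b → f a = f b → ∀ l, (∀ x < f a + Pi.single l 1, x ∈ S) →
      (a - b).val ≤ (l - b).val := by
    intro a b hab hfab l hl
    have hla : l ≠ a := by
      rintro rfl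
      obtain ⟨x, hx, hxl, -⟩ := exists_mem_of_forall_lt_add_single_mem hl hab.symm
        (hfab ▸ hfpos b)
      have := hmax l x hx
      omega
    obtain ⟨x, hx, hxl, hxle⟩ := exists_mem_of_forall_lt_add_single_mem hl hla.symm (hfpos a)
    rw [hfab] at hxl hxle
    exact val_sub_le_of_forall_cyclicLex_le hS (hftop b) hx hxle (by omega)
  have hinj : f.Injective := by
    intro i j hij
    by_contra hne
    obtain ⟨l, hl⟩ := hexch (f i) (hfM i)
    have hij' := hunit hne hij l hl
    have hji' := hunit (Ne.symm hne) hij.symm l (hij ▸ hl)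
    exact hij'.not_gt (Fin.val_sub_lt_val_sub_of_val_sub_le (Ne.symm hne) hji')
  calc k = (Set.range f).ncard := by rw [Set.ncard_range_of_injective hinj, Nat.card_fin]
    _ ≤ M.ncard := Set.ncard_le_ncard (Set.range_subset_iff.2 hfM) hM

end Exchange

theorem Maximal.maximal_of_lt {α : Type*} [Preorder α] {P : α → Prop} {c y : α}
    (hc : Maximal (fun x => P x ∧ ¬ Maximal P x) c) (hcy : c < y) (hy : P y) : Maximal P y := by
  by_contra h
  exact hc.not_gt ⟨hy, h⟩ hcy

theorem IsLowerSet.mem_and_not_maximal_of_lt {α : Type*} [Preorder α] {Λ : Set α}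
    (hΛ : IsLowerSet Λ) {x y : α} (hy : y ∈ Λ) (hxy : x < y) :
    x ∈ Λ ∧ ¬ Maximal (· ∈ Λ) x :=
  ⟨hΛ hxy.le hy, fun hx => hx.not_gt hy hxy⟩

theorem IsLowerSet.exists_forall_lt_add_single {ι : Type*} [DecidableEq ι] {Λ : Set (ι → ℕ)}
    (hΛ : IsLowerSet Λ) {c : ι → ℕ} (hc : c ∈ Λ) (hnc : ¬ Maximal (· ∈ Λ) c) :
    ∃ l, ∀ x < c + Pi.single l 1, x ∈ Λ ∧ ¬ Maximal (· ∈ Λ) x := by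
  obtain ⟨ν, hcν, hν⟩ := exists_gt_of_not_maximal hc hnc
  obtain ⟨hle, l, hl⟩ := Pi.lt_def.1 hcν
  have hcl : c + Pi.single l 1 ≤ ν := fun t => by
    rcases eq_or_ne t l with rfl | ht
    · simpa using hl
    · simpa [ht] using hle t
  exact ⟨l, fun x hx => hΛ.mem_and_not_maximal_of_lt (hΛ hcl hν) hx⟩

theorem single_one_lt_of_apply_ne_zero {ι : Type*} [DecidableEq ι] {i : ι} {x : ι → ℕ}
    (hi : x i ≠ 0) (hne : x ≠ Pi.single i 1) : Pi.single i 1 < x := by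
  refine lt_of_le_of_ne (fun t => ?_) (Ne.symm hne)
  rcases eq_or_ne t i with rfl | ht
  · simpa [Nat.one_le_iff_ne_zero] using hi
  · simp [ht]

theorem precorner_of_maximal_not_maximal {ι : Type*} [DecidableEq ι] {Λ : Set (ι → ℕ)}
    {c : ι → ℕ} (hc : Maximal (fun x => x ∈ Λ ∧ ¬ Maximal (· ∈ Λ) x) c) :
    c ∈ Λ ∧ ¬ (∀ ν ∈ Λ, c ≤ ν → ν = c) ∧
      ∀ i, c + Pi.single i 1 ∉ Λ ∨
        (c + Pi.single i 1 ∈ Λ ∧ ∀ ν ∈ Λ, c + Pi.single i 1 ≤ ν → ν = c + Pi.single i 1) := by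
  obtain ⟨hcΛ, hnc⟩ := hc.prop
  refine ⟨hcΛ, fun h => hnc (maximal_iff.2 ⟨hcΛ, fun ν hν hle => (h ν hν hle).symm⟩),
    fun i => ?_⟩
  by_cases hi : c + Pi.single i 1 ∈ Λ
  · have hlt : c < c + Pi.single i 1 := lt_add_of_pos_right c (Pi.single_pos.2 one_pos)
    exact Or.inr ⟨hi, fun ν hν hle => (hc.maximal_of_lt hlt hi).eq_of_ge hν hle⟩
  · exact Or.inl hi

theorem precorner_count_ge_dimension_general
    (k : ℕ) (Λ : Finset (Fin k → ℕ))
    (hdc : ∀ μ ∈ Λ, ∀ lam : Fin k → ℕ, lam ≤ μ → lam ∈ Λ)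
    (hnonexc : ∀ i : Fin k, ∃ lam ∈ Λ, lam i ≠ 0 ∧ lam ≠ Pi.single i 1) :
    k ≤ Set.ncard {lam : Fin k → ℕ | lam ∈ Λ ∧
      ¬ (∀ ν ∈ Λ, lam ≤ ν → ν = lam) ∧
      ∀ i : Fin k, lam + Pi.single i 1 ∉ Λ ∨
        (lam + Pi.single i 1 ∈ Λ ∧ ∀ ν ∈ Λ, lam + Pi.single i 1 ≤ ν → ν = lam + Pi.single i 1)} := by
  have hΛ : IsLowerSet (Λ : Set (Fin k → ℕ)) := fun μ lam hle hμ => hdc μ hμ lam hle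
  set S : Set (Fin k → ℕ) := {x | x ∈ Λ ∧ ¬ Maximal (· ∈ Λ) x}
  have hS : S.Finite := Λ.finite_toSet.subset fun x hx => hx.1
  have hpos : ∀ i, ∃ s ∈ S, s i ≠ 0 := fun i => by
    obtain ⟨lam, hlam, hi, hne⟩ := hnonexc i
    exact ⟨Pi.single i 1,
      hΛ.mem_and_not_maximal_of_lt hlam (single_one_lt_of_apply_ne_zero hi hne), by simp⟩
  have hexch : ∀ c, Maximal (· ∈ S) c → ∃ l, ∀ x < c + Pi.single l 1, x ∈ S :=
    fun c hc => hΛ.exists_forall_lt_add_single hc.prop.1 hc.prop.2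
  calc k ≤ {c | Maximal (· ∈ S) c}.ncard := le_ncard_maximal_of_exchange hS hpos hexch
    _ ≤ _ := Set.ncard_le_ncard (fun c hc => precorner_of_maximal_not_maximal hc)
      (Λ.finite_toSet.subset fun x hx => hx.1)

/-- If `Λ` is a non-exceptional `k`-dimensional Young diagram, then `Λ` has at least `k`
precorner cells. Here a non-corner cell `λ ∈ Λ` is a precorner cell if for every `i`,
either `λ + e_i ∉ Λ` or `λ + e_i` is a corner cell of `Λ`. -/
theorem precorner_count_ge_dimension
    (k : ℕ) (Λ : Finset (Fin k → ℕ))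
    (hdc : ∀ μ ∈ Λ, ∀ lam : Fin k → ℕ, lam ≤ μ → lam ∈ Λ)
    (hdim : ∀ i : Fin k, ∃ lam ∈ Λ, lam i ≠ 0)
    (hnonexc : ∀ i : Fin k, ∃ lam ∈ Λ, lam i ≠ 0 ∧ lam ≠ Pi.single i 1) :
    k ≤ Set.ncard {lam : Fin k → ℕ | lam ∈ Λ ∧
      ¬ (∀ ν ∈ Λ, lam ≤ ν → ν = lam) ∧
      ∀ i : Fin k, lam + Pi.single i 1 ∉ Λ ∨
        (lam + Pi.single i 1 ∈ Λ ∧ ∀ ν ∈ Λ, lam + Pi.single i 1 ≤ ν → ν = lam + Pi.single i 1)} :=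
  precorner_count_ge_dimension_general k Λ hdc hnonexc
end

section
/- Let Λ be a 2-dimensional Young diagram. Then for any two corner cells μ ≠ ν of Λ, there exists a precorner cell λ of Λ lying in the 'hook' between them; consequently if Λ has at most two precorner cells then Λ has at most three corner cells. -/
/-!
Two distinct corners of a diagram have distinct first coordinates, so list them as
`μ₁, …, μₖ` with `μ₁.1 < ⋯ < μₖ.1` (and hence `μ₁.2 > ⋯ > μₖ.2`). For a pair `μ.1 < ν.1`, the
cell `(μ.1, ν.2)` lies below both and so is not a corner; a maximal non-corner cell above it is
a precorner, and it cannot dominate `ν`, so its first coordinate lies in `[μ.1, ν.1)`. The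
intervals `[μᵢ.1, μᵢ₊₁.1)` are disjoint, so there are at least `k - 1` precorners.
-/

open Finset

theorem Finset.card_le_card_add_one_of_forall_lt_exists_mem_Ico {α : Type*} [LinearOrder α]
    {A B : Finset α} (h : ∀ a ∈ A, ∀ a' ∈ A, a < a' → ∃ b ∈ B, a ≤ b ∧ b < a') :
    #A ≤ #B + 1 := by
  classical
  induction A using Finset.induction_on_max generalizing B with
  | empty => simp
  | insert a s hlt ih =>
    rcases s.eq_empty_or_nonempty with rfl | hs
    · simp
    set m := s.max' hs
    have hm : m ∈ s := s.max'_mem hs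
    obtain ⟨b, hb, hmb, -⟩ := h m (mem_insert_of_mem hm) a (mem_insert_self a s) (hlt m hm)
    have hsB : #s ≤ #{b ∈ B | b < m} + 1 := ih fun x hx y hy hxy => by
      obtain ⟨c, hc, hxc, hcy⟩ := h x (mem_insert_of_mem hx) y (mem_insert_of_mem hy) hxy
      exact ⟨c, mem_filter.2 ⟨hc, hcy.trans_le (s.le_max' y hy)⟩, hxc, hcy⟩
    have hB : #{b ∈ B | b < m} < #B :=
      card_lt_card (filter_ssubset.2 ⟨b, hb, not_lt.2 hmb⟩)
    rw [card_insert_of_notMem fun ha => (hlt a ha).false]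
    omega

section MaximalProd

variable {α β : Type*} [LinearOrder α] [LinearOrder β] {P : α × β → Prop} {μ ν : α × β}

theorem Maximal.snd_lt_snd_of_fst_lt (hμ : Maximal P μ) (hν : Maximal P ν) (h : μ.1 < ν.1) :
    ν.2 < μ.2 := by
  by_contra! h₂
  exact h.ne (congrArg Prod.fst (hμ.eq_of_le hν.prop ⟨h.le, h₂⟩))

theorem Set.injOn_fst_setOf_maximal : Set.InjOn Prod.fst {x | Maximal P x} := by
  intro μ hμ ν hν h
  rcases le_total μ.2 ν.2 with h₂ | h₂
  · exact hμ.eq_of_le hν.prop ⟨h.le, h₂⟩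
  · exact (hν.eq_of_le hμ.prop ⟨h.ge, h₂⟩).symm

end MaximalProd

theorem maximal_mem_finset_iff {α : Type*} [PartialOrder α] {s : Finset α} {x : α} :
    Maximal (· ∈ s) x ↔ x ∈ s ∧ ∀ ρ ∈ s, x ≤ ρ → ρ = x := by
  simp only [maximal_iff, @eq_comm _ x]

/-- The corner cells of `Λ` are the `x` with `Maximal (· ∈ Λ) x`. -/
def IsPrecorner (Λ : Finset (ℕ × ℕ)) (x : ℕ × ℕ) : Prop :=
  x ∈ Λ ∧ ¬ Maximal (· ∈ Λ) x ∧
    (x + (1, 0) ∈ Λ → Maximal (· ∈ Λ) (x + (1, 0))) ∧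
    (x + (0, 1) ∈ Λ → Maximal (· ∈ Λ) (x + (0, 1)))

section Diagram

variable {Λ : Finset (ℕ × ℕ)}

theorem isPrecorner_iff {x : ℕ × ℕ} :
    IsPrecorner Λ x ↔ x ∈ Λ ∧ (¬ (∀ ρ ∈ Λ, x ≤ ρ → ρ = x)) ∧
      (x + (1, 0) ∉ Λ ∨ (∀ ρ ∈ Λ, x + (1, 0) ≤ ρ → ρ = x + (1, 0))) ∧
      (x + (0, 1) ∉ Λ ∨ (∀ ρ ∈ Λ, x + (0, 1) ≤ ρ → ρ = x + (0, 1))) := by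
  simp only [IsPrecorner, maximal_mem_finset_iff]
  tauto

theorem isPrecorner_of_maximal {U : Set (ℕ × ℕ)} (hU : IsUpperSet U) {lam : ℕ × ℕ}
    (h : Maximal (fun x => x ∈ Λ ∧ x ∈ U ∧ ¬ Maximal (· ∈ Λ) x) lam) : IsPrecorner Λ lam := by
  have hcorner : ∀ d : ℕ × ℕ, d ≠ 0 → lam + d ∈ Λ → Maximal (· ∈ Λ) (lam + d) := by
    intro d hd hmem
    by_contra hnc
    have hle : lam ≤ lam + d := le_self_add
    exact hd (add_eq_left.1 (h.eq_of_le ⟨hmem, hU hle h.prop.2.1, hnc⟩ hle).symm)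
  exact ⟨h.prop.1, h.prop.2.2, hcorner _ (by simp), hcorner _ (by simp)⟩

theorem exists_isPrecorner_of_fst_lt (hΛ : IsLowerSet (Λ : Set (ℕ × ℕ))) {μ ν : ℕ × ℕ}
    (hμ : Maximal (· ∈ Λ) μ) (hν : Maximal (· ∈ Λ) ν) (h : μ.1 < ν.1) :
    ∃ lam, IsPrecorner Λ lam ∧ μ.1 ≤ lam.1 ∧ lam.1 < ν.1 ∧ ν.2 ≤ lam.2 := by
  set p : ℕ × ℕ := (μ.1, ν.2)
  have hpμ : p ≤ μ := ⟨le_rfl, (hμ.snd_lt_snd_of_fst_lt hν h).le⟩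
  have hpν : p ≤ ν := ⟨h.le, le_rfl⟩
  have hp : ¬ Maximal (· ∈ Λ) p := fun hp =>
    h.ne (congrArg Prod.fst ((hp.eq_of_le hμ.prop hpμ).symm.trans (hp.eq_of_le hν.prop hpν)))
  obtain ⟨lam, hlam⟩ := Set.Finite.exists_maximal
    (s := {x | x ∈ Λ ∧ x ∈ Set.Ici p ∧ ¬ Maximal (· ∈ Λ) x})
    (Λ.finite_toSet.subset fun _ hx => hx.1) ⟨p, hΛ hpμ hμ.prop, Set.self_mem_Ici, hp⟩
  obtain ⟨hlamΛ, hplam, hlam_nc⟩ := hlam.prop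
  refine ⟨lam, isPrecorner_of_maximal (isUpperSet_Ici p) hlam, hplam.1, ?_, hplam.2⟩
  by_contra! hνlam
  exact hlam_nc (hν.eq_of_le hlamΛ ⟨hνlam, hplam.2⟩ ▸ hν)

theorem exists_isPrecorner_min_le (hΛ : IsLowerSet (Λ : Set (ℕ × ℕ))) {μ ν : ℕ × ℕ}
    (hμ : Maximal (· ∈ Λ) μ) (hν : Maximal (· ∈ Λ) ν) (hne : μ ≠ ν) :
    ∃ lam, IsPrecorner Λ lam ∧ min μ.1 ν.1 ≤ lam.1 ∧ min μ.2 ν.2 ≤ lam.2 := by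
  wlog h : μ.1 < ν.1 generalizing μ ν
  · have h' : ν.1 < μ.1 :=
      (not_lt.1 h).lt_of_ne fun h' => hne (Set.injOn_fst_setOf_maximal hμ hν h'.symm)
    simpa only [min_comm] using this hν hμ hne.symm h'
  obtain ⟨lam, hlam, h₁, -, h₂⟩ := exists_isPrecorner_of_fst_lt hΛ hμ hν h
  exact ⟨lam, hlam, (min_le_left _ _).trans h₁, (min_le_right _ _).trans h₂⟩

theorem ncard_maximal_le_ncard_isPrecorner_add_one (hΛ : IsLowerSet (Λ : Set (ℕ × ℕ))) :
    {x | Maximal (· ∈ Λ) x}.ncard ≤ {x | IsPrecorner Λ x}.ncard + 1 := by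
  classical
  have hC : {x | Maximal (· ∈ Λ) x} = ↑{x ∈ Λ | Maximal (· ∈ Λ) x} := by
    ext x; simpa using fun h : Maximal (· ∈ Λ) x => h.prop
  have hP : {x | IsPrecorner Λ x} = ↑{x ∈ Λ | IsPrecorner Λ x} := by
    ext x; simpa using fun h : IsPrecorner Λ x => h.1
  rw [hC, hP, Set.ncard_coe_finset, Set.ncard_coe_finset]
  calc #{x ∈ Λ | Maximal (· ∈ Λ) x}
      = #(({x ∈ Λ | Maximal (· ∈ Λ) x}).image Prod.fst) := by
        refine (card_image_of_injOn fun μ hμ ν hν => ?_).symm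
        exact Set.injOn_fst_setOf_maximal (mem_filter.1 hμ).2 (mem_filter.1 hν).2
    _ ≤ #(({x ∈ Λ | IsPrecorner Λ x}).image Prod.fst) + 1 := by
        refine card_le_card_add_one_of_forall_lt_exists_mem_Ico fun a ha a' ha' h => ?_
        obtain ⟨μ, hμ, rfl⟩ := mem_image.1 ha
        obtain ⟨ν, hν, rfl⟩ := mem_image.1 ha'
        obtain ⟨lam, hlam, h₁, h₂, -⟩ :=
          exists_isPrecorner_of_fst_lt hΛ (mem_filter.1 hμ).2 (mem_filter.1 hν).2 h
        exact ⟨lam.1, mem_image_of_mem _ (mem_filter.2 ⟨hlam.1, hlam⟩), h₁, h₂⟩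
    _ ≤ #{x ∈ Λ | IsPrecorner Λ x} + 1 := by
        gcongr
        exact card_image_le

end Diagram

/-- For a 2-dimensional Young diagram `Λ`, between any two distinct corner cells there is a
precorner cell lying in the hook joining them; consequently, if `Λ` has at most two
precorner cells then it has at most three corner cells. -/
theorem hook_contains_precorner
    (Λ : Finset (ℕ × ℕ))
    (hdc : ∀ μ ∈ Λ, ∀ lam : ℕ × ℕ, lam ≤ μ → lam ∈ Λ) :
    (∀ μ ∈ Λ, ∀ ν ∈ Λ, (∀ ρ ∈ Λ, μ ≤ ρ → ρ = μ) → (∀ ρ ∈ Λ, ν ≤ ρ → ρ = ν) → μ ≠ ν →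
      ∃ lam ∈ Λ,
        (¬ (∀ ρ ∈ Λ, lam ≤ ρ → ρ = lam)) ∧
        (lam + (1, 0) ∉ Λ ∨ (∀ ρ ∈ Λ, lam + (1, 0) ≤ ρ → ρ = lam + (1, 0))) ∧
        (lam + (0, 1) ∉ Λ ∨ (∀ ρ ∈ Λ, lam + (0, 1) ≤ ρ → ρ = lam + (0, 1))) ∧
        min μ.1 ν.1 ≤ lam.1 ∧ min μ.2 ν.2 ≤ lam.2) ∧
    (Set.ncard {lam : ℕ × ℕ | lam ∈ Λ ∧ (¬ (∀ ρ ∈ Λ, lam ≤ ρ → ρ = lam)) ∧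
        (lam + (1, 0) ∉ Λ ∨ (∀ ρ ∈ Λ, lam + (1, 0) ≤ ρ → ρ = lam + (1, 0))) ∧
        (lam + (0, 1) ∉ Λ ∨ (∀ ρ ∈ Λ, lam + (0, 1) ≤ ρ → ρ = lam + (0, 1)))} ≤ 2 →
      Set.ncard {μ : ℕ × ℕ | μ ∈ Λ ∧ ∀ ρ ∈ Λ, μ ≤ ρ → ρ = μ} ≤ 3) := by
  have hΛ : IsLowerSet (Λ : Set (ℕ × ℕ)) := fun a b hba ha => hdc a ha b hba
  refine ⟨fun μ hμ ν hν hμc hνc hne => ?_, fun hP => ?_⟩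
  · obtain ⟨lam, hlam, h₁, h₂⟩ :=
      exists_isPrecorner_min_le hΛ (maximal_mem_finset_iff.2 ⟨hμ, hμc⟩) (maximal_mem_finset_iff.2 ⟨hν, hνc⟩) hne
    obtain ⟨hmem, hnc, h₁₀, h₀₁⟩ := isPrecorner_iff.1 hlam
    exact ⟨lam, hmem, hnc, h₁₀, h₀₁, h₁, h₂⟩
  · have hcount := ncard_maximal_le_ncard_isPrecorner_add_one hΛ
    simp only [maximal_mem_finset_iff, isPrecorner_iff] at hcount
    omega
end

section
/- For n ≥ 2, consider A = K[x]/(x^{n+1}) with maximal ideal m = (x), and for z = z_1 x + z_2 x^2 + … + z_n x^n ∈ m regard z_1,…,z_n as coordinate functions on m. The group G of algebra automorphisms of A of the form x ↦ x + a_2 x^2 + … + a_n x^n acts on the coordinate functions, and the stabilizer of the linear form z_n in G is trivial: if such an automorphism has some first nonzero coefficient a_k, then it sends z_n to z_n + (n−k+1) a_k z_{n−k+1} + (a linear combination of z_1,…,z_{n−k}), which differs from z_n. -/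
open Polynomial

/-- For `n ≥ 2` and `A = K[x]/(x^{n+1})`, the stabilizer of the coordinate form `z_n` in the
group of algebra automorphisms `x ↦ x + a_2 x² + … + a_n xⁿ` is trivial: if the
automorphism determined by `p = x + a_2 x² + … + a_n xⁿ` fixes the linear form `z_n`
(i.e. for every `z = Σ_{i=1}^n z_i x^i`, the coefficient of `xⁿ` in `Σ z_i p^i` equals
`z_n`), then all `a_j` vanish. -/
theorem stabilizer_of_top_form_trivial
    (K : Type*) [Field K] [IsAlgClosed K] [CharZero K] (n : ℕ) (hn : 2 ≤ n)
    (a : ℕ → K)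
    (p : Polynomial K)
    (hp : p = X + ∑ j ∈ Finset.Icc 2 n, C (a j) * X ^ j)
    (hfix : ∀ c : ℕ → K,
      (∑ i ∈ Finset.Icc 1 n, C (c i) * p ^ i).coeff n = c n) :
    ∀ j ∈ Finset.Icc 2 n, a j = 0 := by
  set q : K[X] := ∑ j ∈ Finset.Icc 2 n, C (a j) * X ^ j with hqdef
  have hqc : ∀ d, q.coeff d = if d ∈ Finset.Icc 2 n then a d else 0 := by
    intro d
    rw [hqdef, Polynomial.finset_sum_coeff]
    simp only [Polynomial.coeff_C_mul, Polynomial.coeff_X_pow, mul_ite, mul_one, mul_zero]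
    exact Finset.sum_ite_eq (Finset.Icc 2 n) d a
  intro j
  induction j using Nat.strong_induction_on with
  | _ j IH =>
  intro hj
  rw [Finset.mem_Icc] at hj
  obtain ⟨hj2, hjn⟩ := hj
  -- X^j divides q
  have hdvd : (X : K[X]) ^ j ∣ q := by
    rw [Polynomial.X_pow_dvd_iff]
    intro d hd
    rw [hqc]
    split_ifs with h
    · rw [Finset.mem_Icc] at h
      exact IH d hd (Finset.mem_Icc.mpr h)
    · rfl
  set m := n - j + 1 with hm
  have hm1 : 1 ≤ m := Nat.le_add_left 1 _
  have hmn : m < n := by omega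
  -- from hfix: coeff n of p^m is 0
  have key : (p ^ m).coeff n = 0 := by
    have h := hfix (fun i => if i = m then 1 else 0)
    rw [Finset.sum_eq_single m] at h
    · simpa [hmn.ne'] using h
    · intro b _ hb
      simp [hb]
    · intro hmem
      exact absurd (Finset.mem_Icc.mpr ⟨hm1, hmn.le⟩) hmem
  -- expand p^m
  have expand : p ^ m = ∑ k ∈ Finset.range (m + 1),
      X ^ k * q ^ (m - k) * (Nat.choose m k : K[X]) := by
    rw [hp, add_pow]
  -- coefficient computation of each summand
  have hterm : ∀ k ∈ Finset.range (m + 1),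
      (X ^ k * q ^ (m - k) * (Nat.choose m k : K[X])).coeff n =
        if k = m - 1 then (m : K) * a j else 0 := by
    intro k hk
    rw [Finset.mem_range] at hk
    have hcast : ((Nat.choose m k : K[X])) = C ((Nat.choose m k : K)) := by simp
    rw [hcast, Polynomial.coeff_mul_C]
    rcases eq_or_ne k (m - 1) with hk1 | hk1
    · subst hk1
      have hsub : m - (m - 1) = 1 := by omega
      rw [hsub, pow_one]
      have hn' : n = (n - (m - 1)) + (m - 1) := by omega
      rw [hn', Polynomial.coeff_X_pow_mul]
      have : n - (m - 1) = j := by omega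
      rw [this, hqc, if_pos (Finset.mem_Icc.mpr ⟨hj2, hjn⟩)]
      have hch : Nat.choose m (m - 1) = m := by
        rw [Nat.choose_symm hm1, Nat.choose_one_right]
      rw [hch, if_pos rfl, mul_comm]
    · rw [if_neg hk1]
      rcases eq_or_ne k m with hkm | hkm
      · subst hkm
        simp [Nat.sub_self, Polynomial.coeff_X_pow, hmn.ne']
      · -- k ≤ m - 2, divisibility argument
        have hk2 : k + 2 ≤ m := by omega
        have hdvd2 : (X : K[X]) ^ (k + j * (m - k)) ∣ X ^ k * q ^ (m - k) := by
          rw [pow_add]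
          exact mul_dvd_mul dvd_rfl (by
            rw [pow_mul]
            exact pow_dvd_pow_of_dvd hdvd _)
        have hlt : n < k + j * (m - k) := by
          have h2 : 2 ≤ m - k := by omega
          have e1 : (j - 1 + 1) * (m - k) = (j - 1) * (m - k) + (m - k) := by ring
          have e2 : j - 1 + 1 = j := by omega
          rw [e2] at e1
          have h3 : (j - 1) * 2 ≤ (j - 1) * (m - k) := Nat.mul_le_mul_left _ h2
          omega
        rw [Polynomial.X_pow_dvd_iff] at hdvd2
        rw [hdvd2 n hlt, zero_mul]
  rw [expand, Polynomial.finset_sum_coeff, Finset.sum_congr rfl hterm,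
      Finset.sum_ite_eq' (Finset.range (m + 1)) (m - 1) (fun _ => (m : K) * a j),
      if_pos (Finset.mem_range.mpr (by omega))] at key
  have hmK : (m : K) ≠ 0 := Nat.cast_ne_zero.mpr (by omega)
  exact (mul_eq_zero.mp key).resolve_left hmK
end

section
/- For n ≥ 2 and A = K[x]/(x^{n+1}) with maximal ideal m = (x), the group G of algebra automorphisms of A fixing x modulo x^2 (i.e., x ↦ x + a_2 x^2 + … + a_n x^n) acts transitively on the set of hyperplanes U ⊂ m that do not contain x^n. Consequently, any such hyperplane U can be mapped by an automorphism of A to U_0 = span(x, x^2, …, x^{n−1}). -/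
/-!
Write `x` for the class of `X` and `ℓ` for the coefficient of `xⁿ`. A hyperplane `U ⊂ m` with
`xⁿ ∉ U` is `m ∩ ker q` for a functional `q` with `q xⁿ = 1`, while `U₀ = m ∩ ker ℓ`; so an
automorphism `φ` maps `U` onto `U₀` as soon as `ℓ (φ(x)ⁱ) = q (xⁱ)` for `1 ≤ i < n` (for `i = n`
both sides are `1`, because `φ(x)ⁿ = xⁿ`). For `y = φ(x)` these conditions form a triangular
system: replacing `y` by `y + t y^(k+1)` adds `i t` to `ℓ (yⁱ)` for `i = n - k` and leaves it
unchanged for `i > n - k`, so they can be met for `i = n - 1, …, 1` in turn, dividing by `i`.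
Every endomorphism with `φ(x) ≡ x mod x²` is injective, since `φ v - v` lies one step deeper
than `v` in the `x`-adic filtration; hence it is an automorphism.
-/

open Polynomial

section CommRing

variable {R : Type*} [CommRing R] {x y : R}

theorem pow_succ_dvd_pow_sub_pow_of_sq_dvd_sub (h : x ^ 2 ∣ y - x) (i : ℕ) :
    x ^ (i + 1) ∣ y ^ i - x ^ i := by
  obtain ⟨g, hg⟩ := h
  have hy : y ^ i - x ^ i = x ^ i * ((1 + x * g) ^ i - 1 ^ i) := by
    rw [show y = x * (1 + x * g) by linear_combination hg, mul_pow]; ring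
  rw [hy, pow_succ]
  exact mul_dvd_mul_left _
    ((dvd_mul_right x g).trans (by simpa using sub_dvd_pow_sub_pow (1 + x * g) 1 i))

theorem add_mul_pow_pow_eq (y z : R) {i k : ℕ} (h : y ^ (i + 2 * k) = 0) :
    (y + z * y ^ (k + 1)) ^ i = y ^ i + i * z * y ^ (i + k) := by
  obtain ⟨r, hr⟩ := sq_dvd_add_pow_sub_sub (z * y ^ k) 1 i
  rw [show y + z * y ^ (k + 1) = y * (1 + z * y ^ k) by ring, mul_pow]
  simp only [one_pow, one_mul] at hr
  linear_combination y ^ i * hr + z ^ 2 * r * h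

theorem dvd_of_sq_dvd_sub (h : x ^ 2 ∣ y - x) : x ∣ y := by
  simpa using dvd_add ((dvd_pow_self x two_ne_zero).trans h) (dvd_refl x)

theorem pow_eq_zero_of_dvd {n e : ℕ} (h : x ∣ y) (hx : x ^ n = 0) (he : n ≤ e) : y ^ e = 0 := by
  obtain ⟨r, rfl⟩ := h
  rw [mul_pow, pow_eq_zero_of_le he hx, zero_mul]

theorem pow_eq_pow_of_sq_dvd_sub {n : ℕ} (h : x ^ 2 ∣ y - x) (hx : x ^ (n + 1) = 0) :
    y ^ n = x ^ n := by
  simpa [hx, sub_eq_zero] using pow_succ_dvd_pow_sub_pow_of_sq_dvd_sub h n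

end CommRing

section Algebra

variable {K R : Type*} [CommSemiring K] [CommRing R] [Algebra K R] {x : R} {n : ℕ}

theorem AlgHom.sub_dvd_apply_sub (hgen : Algebra.adjoin K {x} = ⊤) (ψ : R →ₐ[K] R) (r : R) :
    ψ x - x ∣ ψ r - r := by
  have hr : r ∈ Algebra.adjoin K {x} := hgen ▸ Algebra.mem_top
  induction hr using Algebra.adjoin_induction with
  | mem r hr => rw [Set.mem_singleton_iff.1 hr]
  | algebraMap c => simp
  | add a b _ _ ha hb => rw [map_add, add_sub_add_comm]; exact dvd_add ha hb
  | mul a b _ _ ha hb =>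
    rw [map_mul, show ψ a * ψ b - a * b = ψ a * (ψ b - b) + (ψ a - a) * b by ring]
    exact dvd_add (hb.mul_left _) (ha.mul_right _)

theorem AlgHom.pow_succ_dvd_apply_sub (hgen : Algebra.adjoin K {x} = ⊤) {ψ : R →ₐ[K] R}
    (hψ : x ^ 2 ∣ ψ x - x) {i : ℕ} {v : R} (hv : x ^ i ∣ v) : x ^ (i + 1) ∣ ψ v - v := by
  obtain ⟨r, rfl⟩ := hv
  rw [map_mul, map_pow, show ψ x ^ i * ψ r - x ^ i * r
    = (ψ x ^ i - x ^ i) * ψ r + x ^ i * (ψ r - r) by ring]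
  refine dvd_add ((pow_succ_dvd_pow_sub_pow_of_sq_dvd_sub hψ i).mul_right _) ?_
  rw [pow_succ]
  exact mul_dvd_mul_left _
    ((dvd_pow_self x two_ne_zero).trans (hψ.trans (ψ.sub_dvd_apply_sub hgen r)))

theorem AlgHom.injective_of_sq_dvd_sub (hgen : Algebra.adjoin K {x} = ⊤) (hx : x ^ (n + 1) = 0)
    {ψ : R →ₐ[K] R} (hψ : x ^ 2 ∣ ψ x - x) : Function.Injective ψ := by
  refine (injective_iff_map_eq_zero ψ).2 fun v hv => ?_
  have hdvd : ∀ i, x ^ i ∣ v := by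
    intro i
    induction i with
    | zero => simp
    | succ i ih => simpa [hv] using ψ.pow_succ_dvd_apply_sub hgen hψ ih
  simpa [hx] using hdvd (n + 1)

variable (K) in
def powSpan (x : R) (a b : ℕ) : Submodule K R :=
  Submodule.span K {y | ∃ i, a ≤ i ∧ i ≤ b ∧ y = x ^ i}

theorem pow_mem_powSpan {a b i : ℕ} (ha : a ≤ i) (hb : i ≤ b) : x ^ i ∈ powSpan K x a b :=
  Submodule.subset_span ⟨i, ha, hb, rfl⟩

theorem mem_powSpan_of_pow_dvd (hgen : Algebra.adjoin K {x} = ⊤) (hx : x ^ (n + 1) = 0) {a : ℕ}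
    {v : R} (h : x ^ a ∣ v) : v ∈ powSpan K x a n := by
  obtain ⟨r, rfl⟩ := h
  obtain ⟨p, rfl⟩ : ∃ p : K[X], Polynomial.aeval x p = r := by
    rw [← AlgHom.mem_range, ← Algebra.adjoin_singleton_eq_range_aeval, hgen]
    exact Algebra.mem_top
  rw [Polynomial.aeval_eq_sum_range, Finset.mul_sum]
  refine Submodule.sum_mem _ fun j _ => ?_
  rw [mul_smul_comm, ← pow_add]
  refine Submodule.smul_mem _ _ ?_
  rcases le_or_gt (a + j) n with h | h
  · exact pow_mem_powSpan le_self_add h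
  · rw [pow_eq_zero_of_le h hx]; exact zero_mem _

theorem AlgHom.map_powSpan_le (hgen : Algebra.adjoin K {x} = ⊤) (hx : x ^ (n + 1) = 0)
    (ψ : R →ₐ[K] R) (h : x ∣ ψ x) : (powSpan K x 1 n).map ψ.toLinearMap ≤ powSpan K x 1 n := by
  rw [powSpan, Submodule.map_span_le]
  rintro _ ⟨i, h1, -, rfl⟩
  refine mem_powSpan_of_pow_dvd hgen hx ?_
  rw [pow_one, AlgHom.toLinearMap_apply, map_pow]
  exact h.trans (dvd_pow_self _ (by omega))

section Coordinate

variable {ℓ : R →ₗ[K] K} (hℓ : ∀ i, 1 ≤ i → i < n → ℓ (x ^ i) = 0)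
include hℓ

theorem powSpan_le_ker : powSpan K x 1 (n - 1) ≤ LinearMap.ker ℓ := by
  rw [powSpan, Submodule.span_le]
  rintro _ ⟨i, h1, h2, rfl⟩
  exact hℓ i h1 (by omega)

theorem sub_smul_mem_powSpan (hℓn : ℓ (x ^ n) = 1) {v : R} (hv : v ∈ powSpan K x 1 n) :
    v - ℓ v • x ^ n ∈ powSpan K x 1 (n - 1) := by
  induction hv using Submodule.span_induction with
  | mem _ h =>
    obtain ⟨i, h1, h2, rfl⟩ := h
    rcases h2.lt_or_eq with h | rfl
    · rw [hℓ i h1 h, zero_smul, sub_zero]; exact pow_mem_powSpan h1 (by omega)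
    · rw [hℓn, one_smul, sub_self]; exact zero_mem _
  | zero => simp
  | add v w _ _ hv hw => rw [map_add, add_smul, add_sub_add_comm]; exact add_mem hv hw
  | smul c v _ hv =>
    rw [map_smul, smul_eq_mul, mul_smul, ← smul_sub]; exact Submodule.smul_mem _ _ hv

end Coordinate

end Algebra

section Field

variable {K R : Type*} [Field K] [CommRing R] [Algebra K R] {x : R} {n : ℕ}

theorem exists_sq_dvd_sub_forall_apply_pow_eq [CharZero K] (hx : x ^ (n + 1) = 0)
    (ℓ : R →ₗ[K] K) (hℓ : ℓ (x ^ n) = 1) (c : ℕ → K) :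
    ∃ y, x ^ 2 ∣ y - x ∧ ∀ i, 1 ≤ i → i < n → ℓ (y ^ i) = c i := by
  suffices H : ∀ k, ∃ y, x ^ 2 ∣ y - x ∧ ∀ i, n - k ≤ i → 1 ≤ i → i < n → ℓ (y ^ i) = c i by
    obtain ⟨y, hyx, hy⟩ := H n
    exact ⟨y, hyx, fun i h1 h2 => hy i (by omega) h1 h2⟩
  intro k
  induction k with
  | zero => exact ⟨x, by simp, fun i h1 _ h2 => absurd h2 (by omega)⟩
  | succ k ih =>
    obtain ⟨y, hyx, hy⟩ := ih
    have hxy := dvd_of_sq_dvd_sub hyx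
    set i₀ := n - (k + 1)
    -- for `i₀ = 0` the division is junk, but then no condition is imposed at `i₀`
    set t : K := (c i₀ - ℓ (y ^ i₀)) / i₀
    refine ⟨y + algebraMap K R t * y ^ (k + 1 + 1), ?_, fun i hi h1 h2 => ?_⟩
    · rw [add_sub_right_comm]
      exact dvd_add hyx
        (((pow_dvd_pow x (by omega)).trans (pow_dvd_pow_of_dvd hxy _)).mul_left _)
    rw [add_mul_pow_pow_eq y _ (pow_eq_zero_of_dvd hxy hx (by omega))]
    rcases (by omega : i = i₀ ∨ n - k ≤ i) with rfl | hi'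
    · rw [show i₀ + (k + 1) = n by omega, pow_eq_pow_of_sq_dvd_sub hyx hx,
        ← map_natCast (algebraMap K R), ← map_mul, ← Algebra.smul_def, map_add, map_smul, hℓ,
        smul_eq_mul, mul_one, mul_div_cancel₀ _ (by exact_mod_cast (by omega : i₀ ≠ 0)),
        add_sub_cancel]
    · rw [pow_eq_zero_of_dvd hxy hx (show n + 1 ≤ i + (k + 1) by omega), mul_zero, add_zero]
      exact hy i hi' h1 h2

theorem map_eq_powSpan [FiniteDimensional K R] {ℓ : R →ₗ[K] K}
    (hℓ : ∀ i, 1 ≤ i → i < n → ℓ (x ^ i) = 0) (hn : 1 ≤ n) (hℓn : ℓ (x ^ n) = 1)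
    {U : Submodule K R} (hU : Module.finrank K U + 1 = Module.finrank K (powSpan K x 1 n))
    (φ : R ≃ₗ[K] R) (hφm : ∀ v ∈ U, φ v ∈ powSpan K x 1 n) (hφ : ∀ v ∈ U, ℓ (φ v) = 0) :
    U.map (φ : R →ₗ[K] R) = powSpan K x 1 (n - 1) := by
  have hle : U.map (φ : R →ₗ[K] R) ≤ powSpan K x 1 (n - 1) := by
    rintro _ ⟨v, hv, rfl⟩
    simpa [hφ v hv] using sub_smul_mem_powSpan hℓ hℓn (hφm v hv)
  have hlt : powSpan K x 1 (n - 1) < powSpan K x 1 n := by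
    refine SetLike.lt_iff_le_and_exists.2 ⟨Submodule.span_mono ?_, x ^ n,
      pow_mem_powSpan hn le_rfl, fun h => by simpa [hℓn] using powSpan_le_ker hℓ h⟩
    rintro _ ⟨i, h1, h2, rfl⟩
    exact ⟨i, h1, by omega, rfl⟩
  refine Submodule.eq_of_le_of_finrank_le hle ?_
  have := Submodule.finrank_lt_finrank_of_lt hlt
  rw [LinearEquiv.finrank_map_eq]
  omega

end Field

theorem Submodule.exists_le_ker_apply_eq_one {K V : Type*} [Field K] [AddCommGroup V]
    [Module K V] {p : Submodule K V} {v : V} (hv : v ∉ p) :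
    ∃ f : V →ₗ[K] K, f v = 1 ∧ p ≤ LinearMap.ker f := by
  obtain ⟨f, hfv, hf⟩ := p.exists_dual_map_eq_bot_of_notMem hv inferInstance
  refine ⟨(f v)⁻¹ • f, inv_mul_cancel₀ hfv, fun w hw => ?_⟩
  simp [LinearMap.mem_ker.1 (LinearMap.le_ker_iff_map.2 hf hw)]

theorem PowerBasis.exists_linearMap_gen_pow {K S : Type*} [Field K] [CommRing S] [Algebra K S]
    (pb : PowerBasis K S) {j : ℕ} (hj : j < pb.dim) :
    ∃ ℓ : S →ₗ[K] K, (∀ i < j, ℓ (pb.gen ^ i) = 0) ∧ ℓ (pb.gen ^ j) = 1 := by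
  have hcoord : ∀ i (hi : i < pb.dim),
      pb.basis.coord ⟨j, hj⟩ (pb.gen ^ i) = if i = j then 1 else 0 := by
    intro i hi
    rw [show pb.gen ^ i = pb.basis ⟨i, hi⟩ by simp, Module.Basis.coord_apply,
      Module.Basis.repr_self, Finsupp.single_apply]
    simp [Fin.ext_iff, eq_comm]
  exact ⟨_, fun i hi => by rw [hcoord i (hi.trans hj), if_neg hi.ne],
    by rw [hcoord j hj, if_pos rfl]⟩

namespace AdjoinRoot

variable {K : Type*} [Field K] {n : ℕ}

theorem root_X_pow_pow_eq_zero {R : Type*} [CommRing R] :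
    root ((X : R[X]) ^ (n + 1)) ^ (n + 1) = 0 := by
  simpa using eval₂_root ((X : R[X]) ^ (n + 1))

instance {R : Type*} [CommRing R] : Module.Finite R (AdjoinRoot ((X : R[X]) ^ (n + 1))) :=
  (monic_X_pow (n + 1)).finite_adjoinRoot

theorem exists_linearMap_root_X_pow_pow :
    ∃ ℓ : AdjoinRoot ((X : K[X]) ^ (n + 1)) →ₗ[K] K,
      (∀ i < n, ℓ (root (X ^ (n + 1)) ^ i) = 0) ∧ ℓ (root (X ^ (n + 1)) ^ n) = 1 :=
  (powerBasis (pow_ne_zero (n + 1) (X_ne_zero (R := K)))).exists_linearMap_gen_pow (by simp)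

theorem exists_algEquiv_root_X_pow_eq {y : AdjoinRoot ((X : K[X]) ^ (n + 1))}
    (hy : root (X ^ (n + 1)) ^ 2 ∣ y - root (X ^ (n + 1))) :
    ∃ φ : AdjoinRoot ((X : K[X]) ^ (n + 1)) ≃ₐ[K] AdjoinRoot ((X : K[X]) ^ (n + 1)),
      φ (root (X ^ (n + 1))) = y := by
  let ψ := liftAlgHom _ (Algebra.ofId K _) y (by
    rw [eval₂_X_pow]
    exact pow_eq_zero_of_dvd (dvd_of_sq_dvd_sub hy) root_X_pow_pow_eq_zero le_rfl)
  have hψ : ψ (root _) = y := liftAlgHom_root ..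
  have hinj := ψ.injective_of_sq_dvd_sub adjoinRoot_eq_top root_X_pow_pow_eq_zero (hψ ▸ hy)
  exact ⟨AlgEquiv.ofBijective ψ
    ⟨hinj, (LinearMap.injective_iff_surjective (f := ψ.toLinearMap)).1 hinj⟩, hψ⟩

end AdjoinRoot

open AdjoinRoot in
theorem automorphisms_transitive_on_hyperplanes_general
    (K : Type*) [Field K] [CharZero K] (n : ℕ) (hn : 2 ≤ n)
    (U : Submodule K (Polynomial K ⧸ Ideal.span {(X : Polynomial K) ^ (n + 1)}))
    (hUm : U ≤ Submodule.span K
      {y | ∃ i, 1 ≤ i ∧ i ≤ n ∧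
        y = Ideal.Quotient.mk (Ideal.span {(X : Polynomial K) ^ (n + 1)}) X ^ i})
    (hhyp : Module.finrank K U + 1 = Module.finrank K (Submodule.span K
      {y | ∃ i, 1 ≤ i ∧ i ≤ n ∧
        y = Ideal.Quotient.mk (Ideal.span {(X : Polynomial K) ^ (n + 1)}) X ^ i}))
    (hxn : Ideal.Quotient.mk (Ideal.span {(X : Polynomial K) ^ (n + 1)}) X ^ n ∉ U) :
    ∃ φ : (Polynomial K ⧸ Ideal.span {(X : Polynomial K) ^ (n + 1)}) ≃ₐ[K]
        (Polynomial K ⧸ Ideal.span {(X : Polynomial K) ^ (n + 1)}),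
      (φ (Ideal.Quotient.mk (Ideal.span {(X : Polynomial K) ^ (n + 1)}) X) -
          Ideal.Quotient.mk (Ideal.span {(X : Polynomial K) ^ (n + 1)}) X ∈
        Submodule.span K
          {y | ∃ i, 2 ≤ i ∧ i ≤ n ∧
            y = Ideal.Quotient.mk (Ideal.span {(X : Polynomial K) ^ (n + 1)}) X ^ i}) ∧
      Submodule.map φ.toLinearMap U = Submodule.span K
        {y | ∃ i, 1 ≤ i ∧ i ≤ n - 1 ∧
          y = Ideal.Quotient.mk (Ideal.span {(X : Polynomial K) ^ (n + 1)}) X ^ i} := by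
  have hx := root_X_pow_pow_eq_zero (R := K) (n := n)
  obtain ⟨ℓ, hℓ, hℓn⟩ := exists_linearMap_root_X_pow_pow (K := K) (n := n)
  obtain ⟨q, hqn, hqU⟩ := Submodule.exists_le_ker_apply_eq_one hxn
  obtain ⟨y, hyx, hy⟩ := exists_sq_dvd_sub_forall_apply_pow_eq hx ℓ hℓn fun i => q (root _ ^ i)
  obtain ⟨φ, rfl⟩ := exists_algEquiv_root_X_pow_eq hyx
  have hφm := φ.toAlgHom.map_powSpan_le adjoinRoot_eq_top hx (dvd_of_sq_dvd_sub hyx)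
  have hφq : ∀ v ∈ powSpan K (root (X ^ (n + 1))) 1 n, ℓ (φ v) = q v := by
    refine LinearMap.eqOn_span' (f := ℓ ∘ₗ φ.toLinearMap) ?_
    rintro _ ⟨i, h1, h2, rfl⟩
    rcases h2.lt_or_eq with h2 | rfl
    all_goals simp only [LinearMap.comp_apply, AlgEquiv.toLinearMap_apply, map_pow]
    · exact hy i h1 h2
    · rw [pow_eq_pow_of_sq_dvd_sub hyx hx, hℓn]
      exact hqn.symm
  refine ⟨φ, mem_powSpan_of_pow_dvd adjoinRoot_eq_top hx hyx, ?_⟩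
  exact map_eq_powSpan (fun i _ hi => hℓ i hi) (by omega) hℓn hhyp φ.toLinearEquiv
    (fun v hv => hφm ⟨v, hUm hv, rfl⟩) fun v hv => (hφq v (hUm hv)).trans (hqU hv)

/-- For `n ≥ 2` and `A = K[x]/(x^{n+1})` with maximal ideal `m = (x)`, the group of algebra
automorphisms of `A` of the form `x ↦ x + a_2 x² + … + a_n xⁿ` acts transitively on the
hyperplanes `U ⊂ m` not containing `xⁿ`; consequently, any such hyperplane can be mapped by
an automorphism of `A` (fixing `x` modulo `x²`) to `U₀ = span(x, x², …, x^{n−1})`. -/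
theorem automorphisms_transitive_on_hyperplanes
    (K : Type*) [Field K] [IsAlgClosed K] [CharZero K] (n : ℕ) (hn : 2 ≤ n)
    (U : Submodule K (Polynomial K ⧸ Ideal.span {(X : Polynomial K) ^ (n + 1)}))
    (hUm : U ≤ Submodule.span K
      {y | ∃ i, 1 ≤ i ∧ i ≤ n ∧
        y = Ideal.Quotient.mk (Ideal.span {(X : Polynomial K) ^ (n + 1)}) X ^ i})
    (hhyp : Module.finrank K U + 1 = Module.finrank K (Submodule.span K
      {y | ∃ i, 1 ≤ i ∧ i ≤ n ∧
        y = Ideal.Quotient.mk (Ideal.span {(X : Polynomial K) ^ (n + 1)}) X ^ i}))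
    (hxn : Ideal.Quotient.mk (Ideal.span {(X : Polynomial K) ^ (n + 1)}) X ^ n ∉ U) :
    ∃ φ : (Polynomial K ⧸ Ideal.span {(X : Polynomial K) ^ (n + 1)}) ≃ₐ[K]
        (Polynomial K ⧸ Ideal.span {(X : Polynomial K) ^ (n + 1)}),
      (φ (Ideal.Quotient.mk (Ideal.span {(X : Polynomial K) ^ (n + 1)}) X) -
          Ideal.Quotient.mk (Ideal.span {(X : Polynomial K) ^ (n + 1)}) X ∈
        Submodule.span K
          {y | ∃ i, 2 ≤ i ∧ i ≤ n ∧
            y = Ideal.Quotient.mk (Ideal.span {(X : Polynomial K) ^ (n + 1)}) X ^ i}) ∧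
      Submodule.map φ.toLinearMap U = Submodule.span K
        {y | ∃ i, 1 ≤ i ∧ i ≤ n - 1 ∧
          y = Ideal.Quotient.mk (Ideal.span {(X : Polynomial K) ^ (n + 1)}) X ^ i} :=
  automorphisms_transitive_on_hyperplanes_general K n hn U hUm hhyp hxn
end

section
/- Let Λ ⊆ Z_{≥0}^k be a Young diagram with corner cell set containing only the cells d_1 e_1, …, d_k e_k ('rays' of lengths d_1 ≥ … ≥ d_k ≥ 2), and let b_1,…,b_k be nonzero scalars. In the algebra A = K[x_1,…,x_k]/(x_i x_j for i≠j; x_i^{d_i+1} for all i; b_j x_i^{d_i} − b_i x_j^{d_j} for all i,j), the socle is one-dimensional, spanned by x_1^{d_1}; i.e., A is Gorenstein. -/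
/-!
The ideal `I` of relations is cut out by linear conditions on coefficients: `p ∈ I` iff the
coefficients of `p` at `1` and at `x_i^m` (`0 < m < d_i`) vanish and `∑ b_i [x_i^{d_i}] p = 0`.
These conditions define an ideal containing the relations, since multiplying by `x_t` only shifts
exponents. Conversely, the monomial ideal `(x_i x_j, x_i^{d_i+1}) ⊆ I` misses only the monomials
`x_i^m` with `m ≤ d_i`, so such a `p` is congruent to some `∑ c_i x_i^{d_i}`, which the relations
`b_1 x_i^{d_i} ≡ b_i x_1^{d_1}` turn into `(∑ b_i c_i / b_1) x_1^{d_1} = 0`.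

The `x_t` are nilpotent in `A`, so `A` is local with maximal ideal `(x_1, …, x_k)`. If `p x_t ∈ I`
for every `t`, the low coefficients of `p` vanish (those of `x_t p` are their shifts, and at the
top `b_t ≠ 0`), hence `p ≡ c x_1^{d_1}`; and `x_1^{d_1} ∉ I`, as its top coefficient is `b_1 ≠ 0`.
-/

open MvPolynomial

namespace MvPolynomial

variable {σ R : Type*} [CommSemiring R]

theorem ker_constantCoeff_eq_idealOfVars :
    RingHom.ker (constantCoeff : MvPolynomial σ R →+* R) = idealOfVars σ R := by
  ext p
  rw [RingHom.mem_ker, idealOfVars, ← Set.image_univ, mem_ideal_span_X_image]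
  simp only [Set.mem_univ, true_and]
  constructor
  · intro h u hu
    by_contra! hu0
    obtain rfl : u = 0 := Finsupp.ext hu0
    rw [mem_support_iff, ← constantCoeff_eq] at hu
    exact hu h
  · intro h
    by_contra h'
    obtain ⟨i, hi⟩ := h 0 (by rwa [mem_support_iff, ← constantCoeff_eq])
    exact hi rfl

theorem coeff_single_X_pow_of_ne_zero [DecidableEq σ] {n : ℕ} (hn : n ≠ 0) (i l : σ) (m : ℕ) :
    coeff (Finsupp.single l m) (X i ^ n : MvPolynomial σ R) = if i = l ∧ n = m then 1 else 0 := by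
  simp [coeff_single_X_pow, hn]

theorem coeff_single_X_mul_X {i j : σ} (hij : i ≠ j) (l : σ) (m : ℕ) :
    coeff (Finsupp.single l m) (X i * X j : MvPolynomial σ R) = 0 := by
  classical
  rw [coeff_X_mul']
  split_ifs with h
  · obtain rfl := Finset.mem_singleton.mp (Finsupp.support_single_subset h)
    simp [← Finsupp.single_tsub, coeff_single_X, hij.symm]
  · rfl

theorem coeff_single_X_mul_of_ne {t i : σ} (h : t ≠ i) (m : ℕ) (p : MvPolynomial σ R) :
    coeff (Finsupp.single i m) (X t * p) = 0 := by
  classical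
  rw [coeff_X_mul', if_neg]
  simp [h]

theorem coeff_single_succ_X_mul (i : σ) (m : ℕ) (p : MvPolynomial σ R) :
    coeff (Finsupp.single i (m + 1)) (X i * p) = coeff (Finsupp.single i m) p := by
  rw [add_comm, Finsupp.single_add, coeff_X_mul]

theorem coeff_zero_X_mul (t : σ) (p : MvPolynomial σ R) : coeff 0 (X t * p) = 0 := by
  simp [← constantCoeff_eq]

theorem mul_mem_of_forall_X_mul_mem {S : Submodule R (MvPolynomial σ R)}
    (hS : ∀ t, ∀ p ∈ S, X t * p ∈ S) (r : MvPolynomial σ R) {p : MvPolynomial σ R} (hp : p ∈ S) :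
    r * p ∈ S := by
  induction r using MvPolynomial.induction_on generalizing p with
  | C a => rw [← smul_eq_C_mul]; exact S.smul_mem a hp
  | add r s hr hs => rw [add_mul]; exact S.add_mem (hr hp) (hs hp)
  | mul_X r t hr => rw [mul_assoc]; exact hr (hS t p hp)

end MvPolynomial

theorem Finsupp.exists_single_add_single_le_or_eq_single {σ : Type*} [Nonempty σ] (u : σ →₀ ℕ) :
    (∃ i j, i ≠ j ∧ single i 1 + single j 1 ≤ u) ∨ ∃ i, u = single i (u i) := by
  classical
  rcases le_or_gt u.support.card 1 with h | h
  · exact Or.inr (card_support_le_one.mp h)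
  · obtain ⟨i, hi, j, hj, hij⟩ := Finset.one_lt_card.mp h
    refine Or.inl ⟨i, j, hij, fun l => ?_⟩
    rw [mem_support_iff] at hi hj
    simp only [coe_add, Pi.add_apply, single_apply]
    split_ifs <;> subst_vars <;> simp_all <;> omega

section QuotientByVars

variable {σ K : Type*} [Field K] {I : Ideal (MvPolynomial σ K)}

theorem MvPolynomial.isMaximal_idealOfVars : (idealOfVars σ K).IsMaximal :=
  ker_constantCoeff_eq_idealOfVars (σ := σ) (R := K) ▸
    RingHom.ker_isMaximal_of_surjective _ fun a => ⟨C a, constantCoeff_C σ a⟩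

theorem isMaximal_map_idealOfVars (hI : I ≤ idealOfVars σ K) :
    ((idealOfVars σ K).map (Ideal.Quotient.mk I)).IsMaximal :=
  have := isMaximal_idealOfVars (σ := σ) (K := K)
  Ideal.IsMaximal.map_of_surjective_of_ker_le Ideal.Quotient.mk_surjective
    (by rwa [Ideal.mk_ker])

theorem nilradical_quotient_eq_map_idealOfVars (hI : I ≤ idealOfVars σ K)
    (hX : ∀ t, IsNilpotent (Ideal.Quotient.mk I (X t))) :
    nilradical (MvPolynomial σ K ⧸ I) = (idealOfVars σ K).map (Ideal.Quotient.mk I) := by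
  refine le_antisymm (nilradical_le_prime _ (H := (isMaximal_map_idealOfVars hI).isPrime)) ?_
  rw [idealOfVars, Ideal.map_span, Ideal.span_le]
  rintro _ ⟨_, ⟨t, rfl⟩, rfl⟩
  exact mem_nilradical.mpr (hX t)

theorem isLocalRing_quotient_of_isNilpotent_X (hI : I ≤ idealOfVars σ K)
    (hX : ∀ t, IsNilpotent (Ideal.Quotient.mk I (X t))) : IsLocalRing (MvPolynomial σ K ⧸ I) :=
  have : (nilradical _).IsMaximal :=
    nilradical_quotient_eq_map_idealOfVars hI hX ▸ isMaximal_map_idealOfVars hI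
  IsLocalRing.of_isMaximal_nilradical _

theorem mem_annihilator_maximalIdeal_quotient_iff [IsLocalRing (MvPolynomial σ K ⧸ I)]
    (hI : I ≤ idealOfVars σ K) (a : MvPolynomial σ K ⧸ I) :
    a ∈ (IsLocalRing.maximalIdeal _).annihilator ↔ ∀ t, a * Ideal.Quotient.mk I (X t) = 0 := by
  rw [← IsLocalRing.eq_maximalIdeal (isMaximal_map_idealOfVars hI), idealOfVars, Ideal.map_span,
    Submodule.mem_annihilator_span]
  simp

theorem Ideal.Quotient.smul_mk_eq_mk_C_mul (c : K) (p : MvPolynomial σ K) :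
    c • Ideal.Quotient.mk I p = Ideal.Quotient.mk I (C c * p) := by
  rw [← smul_eq_C_mul, ← Ideal.Quotient.mkₐ_eq_mk K, map_smul]

end QuotientByVars

section RayAlgebra

variable {σ K : Type*} [Field K]

noncomputable def rayRelations (d : σ → ℕ) (b : σ → K) : Set (MvPolynomial σ K) :=
  {q | ∃ i j : σ, i ≠ j ∧ q = X i * X j} ∪ {q | ∃ i : σ, q = X i ^ (d i + 1)} ∪
    {q | ∃ i j : σ, q = C (b j) * X i ^ d i - C (b i) * X j ^ d j}

noncomputable def rayIdeal (d : σ → ℕ) (b : σ → K) : Ideal (MvPolynomial σ K) :=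
  Ideal.span (rayRelations d b)

noncomputable def lowCoeffKer (d : σ → ℕ) : Submodule K (MvPolynomial σ K) :=
  ⨅ i, ⨅ m < d i, LinearMap.ker (lcoeff K (Finsupp.single i m))

noncomputable def rayTopCoeff [Fintype σ] (d : σ → ℕ) (b : σ → K) : MvPolynomial σ K →ₗ[K] K :=
  ∑ i, b i • lcoeff K (Finsupp.single i (d i))

noncomputable def rayKer [Fintype σ] (d : σ → ℕ) (b : σ → K) : Submodule K (MvPolynomial σ K) :=
  lowCoeffKer d ⊓ LinearMap.ker (rayTopCoeff d b)

variable {d : σ → ℕ} {b : σ → K}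

theorem mem_lowCoeffKer {p : MvPolynomial σ K} :
    p ∈ lowCoeffKer d ↔ ∀ i, ∀ m < d i, coeff (Finsupp.single i m) p = 0 := by
  simp [lowCoeffKer]

theorem X_mul_mem_lowCoeffKer (t : σ) {p : MvPolynomial σ K} (hp : p ∈ lowCoeffKer d) :
    X t * p ∈ lowCoeffKer d := by
  rw [mem_lowCoeffKer] at hp ⊢
  intro i m hm
  obtain rfl | hti := eq_or_ne t i
  · cases m with
    | zero => rw [Finsupp.single_zero, coeff_zero_X_mul]
    | succ m => rw [coeff_single_succ_X_mul, hp t m (by omega)]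
  · exact coeff_single_X_mul_of_ne hti m p

theorem X_pow_mem_lowCoeffKer {i : σ} {n : ℕ} (hn : n ≠ 0) (hdn : d i ≤ n) :
    (X i ^ n : MvPolynomial σ K) ∈ lowCoeffKer d := by
  classical
  rw [mem_lowCoeffKer]
  intro l m hm
  rw [coeff_single_X_pow_of_ne_zero hn, if_neg]
  rintro ⟨rfl, rfl⟩
  omega

theorem mem_rayIdeal_of_coeff_single_eq_zero [Nonempty σ] {q : MvPolynomial σ K}
    (hq : ∀ i, ∀ m ≤ d i, coeff (Finsupp.single i m) q = 0) : q ∈ rayIdeal d b := by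
  let S : Set (σ →₀ ℕ) := {u | ∃ i j, i ≠ j ∧ u = Finsupp.single i 1 + Finsupp.single j 1} ∪
    {u | ∃ i, u = Finsupp.single i (d i + 1)}
  have hS : Ideal.span ((monomial · (1 : K)) '' S) ≤ rayIdeal d b := by
    rw [Ideal.span_le]
    rintro _ ⟨u, ⟨i, j, hij, rfl⟩ | ⟨i, rfl⟩, rfl⟩ <;> apply Ideal.subset_span
    · exact Or.inl (Or.inl ⟨i, j, hij, by simp [X, monomial_mul]⟩)
    · exact Or.inl (Or.inr ⟨i, X_pow_eq_monomial.symm⟩)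
  refine hS (mem_ideal_span_monomial_image.mpr fun u hu => ?_)
  rw [mem_support_iff] at hu
  rcases u.exists_single_add_single_le_or_eq_single with ⟨i, j, hij, hle⟩ | ⟨i, hui⟩
  · exact ⟨_, Or.inl ⟨i, j, hij, rfl⟩, hle⟩
  · refine ⟨_, Or.inr ⟨i, rfl⟩, ?_⟩
    rw [hui] at hu ⊢
    have : d i < u i := by by_contra! h; exact hu (hq i _ h)
    exact Finsupp.single_le_single.mpr this

theorem X_pow_succ_mem_rayIdeal (i : σ) : X i ^ (d i + 1) ∈ rayIdeal d b :=
  Ideal.subset_span (Or.inl (Or.inr ⟨i, rfl⟩))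


theorem isNilpotent_mk_rayIdeal_X (i : σ) : IsNilpotent (Ideal.Quotient.mk (rayIdeal d b) (X i)) :=
  ⟨d i + 1, by rw [← map_pow, Ideal.Quotient.eq_zero_iff_mem]; exact X_pow_succ_mem_rayIdeal i⟩


theorem X_pow_mul_X_mem_rayIdeal {i₀ : σ} (h₀ : 0 < d i₀) (t : σ) :
    X i₀ ^ d i₀ * X t ∈ rayIdeal d b := by
  obtain rfl | ht := eq_or_ne t i₀
  · rw [← pow_succ]
    exact X_pow_succ_mem_rayIdeal t
  · rw [← Nat.sub_add_cancel h₀, pow_succ, mul_assoc]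
    exact Ideal.mul_mem_left _ _ (Ideal.subset_span (Or.inl (Or.inl ⟨i₀, t, ht.symm, rfl⟩)))


variable [Fintype σ]

theorem rayTopCoeff_apply (p : MvPolynomial σ K) :
    rayTopCoeff d b p = ∑ i, b i * coeff (Finsupp.single i (d i)) p := by
  simp [rayTopCoeff]

theorem rayTopCoeff_X_mul {t : σ} (ht : 0 < d t) (p : MvPolynomial σ K) :
    rayTopCoeff d b (X t * p) = b t * coeff (Finsupp.single t (d t - 1)) p := by
  rw [rayTopCoeff_apply, Finset.sum_eq_single t]
  · have := coeff_single_succ_X_mul t (d t - 1) p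
    rw [Nat.sub_add_cancel ht] at this
    rw [this]
  · intro i _ hi
    rw [coeff_single_X_mul_of_ne hi.symm, mul_zero]
  · simp

theorem rayTopCoeff_X_pow (i : σ) {n : ℕ} (hn : n ≠ 0) :
    rayTopCoeff d b (X i ^ n) = if n = d i then b i else 0 := by
  classical
  rw [rayTopCoeff_apply, Finset.sum_eq_single i]
  · simp [coeff_single_X_pow_of_ne_zero hn]
  · intro l _ hl
    rw [coeff_single_X_pow_of_ne_zero hn, if_neg (fun h => hl h.1.symm), mul_zero]
  · simp

theorem mem_rayKer {p : MvPolynomial σ K} :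
    p ∈ rayKer d b ↔ p ∈ lowCoeffKer d ∧ rayTopCoeff d b p = 0 :=
  Iff.rfl

theorem X_mul_mem_rayKer (hd : ∀ i, 0 < d i) (t : σ) {p : MvPolynomial σ K}
    (hp : p ∈ rayKer d b) : X t * p ∈ rayKer d b := by
  obtain ⟨hlow, -⟩ := mem_rayKer.mp hp
  refine mem_rayKer.mpr ⟨X_mul_mem_lowCoeffKer t hlow, ?_⟩
  rw [rayTopCoeff_X_mul (hd t), mem_lowCoeffKer.mp hlow t _ (Nat.sub_lt (hd t) one_pos),
    mul_zero]

theorem rayRelations_subset_rayKer (hd : ∀ i, 0 < d i) : rayRelations d b ⊆ rayKer d b := by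
  rintro q ((⟨i, j, hij, rfl⟩ | ⟨i, rfl⟩) | ⟨i, j, rfl⟩) <;> rw [SetLike.mem_coe, mem_rayKer]
  · refine ⟨mem_lowCoeffKer.mpr fun l m _ => coeff_single_X_mul_X hij l m, ?_⟩
    simp [rayTopCoeff_apply, coeff_single_X_mul_X hij]
  · refine ⟨X_pow_mem_lowCoeffKer (Nat.succ_ne_zero _) (Nat.le_succ _), ?_⟩
    rw [rayTopCoeff_X_pow i (Nat.succ_ne_zero _), if_neg (Nat.succ_ne_self _)]
  · have hi := (hd i).ne'
    have hj := (hd j).ne'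
    simp only [← smul_eq_C_mul]
    refine ⟨sub_mem (Submodule.smul_mem _ _ (X_pow_mem_lowCoeffKer hi le_rfl))
      (Submodule.smul_mem _ _ (X_pow_mem_lowCoeffKer hj le_rfl)), ?_⟩
    simp only [map_sub, map_smul, rayTopCoeff_X_pow _ hi, rayTopCoeff_X_pow _ hj,
      if_pos, smul_eq_mul]
    ring

theorem rayIdeal_le_rayKer (hd : ∀ i, 0 < d i) {p : MvPolynomial σ K} (hp : p ∈ rayIdeal d b) :
    p ∈ rayKer d b := by
  refine Submodule.span_induction (fun q hq => rayRelations_subset_rayKer hd hq) (zero_mem _)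
    (fun _ _ _ _ => add_mem) (fun r q _ hq => ?_) hp
  exact mul_mem_of_forall_X_mul_mem (fun t _ => X_mul_mem_rayKer hd t) r hq

theorem rayIdeal_le_idealOfVars [Nonempty σ] (hd : ∀ i, 0 < d i) :
    rayIdeal d b ≤ idealOfVars σ K := fun p hp => by
  obtain ⟨hlow, -⟩ := mem_rayKer.mp (rayIdeal_le_rayKer hd hp)
  let i : σ := Classical.arbitrary σ
  rw [← ker_constantCoeff_eq_idealOfVars, RingHom.mem_ker, constantCoeff_eq,
    ← Finsupp.single_zero i]
  exact mem_lowCoeffKer.mp hlow i 0 (hd i)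

theorem isLocalRing_rayQuotient [Nonempty σ] (hd : ∀ i, 0 < d i) :
    IsLocalRing (MvPolynomial σ K ⧸ rayIdeal d b) :=
  isLocalRing_quotient_of_isNilpotent_X (rayIdeal_le_idealOfVars hd) isNilpotent_mk_rayIdeal_X

theorem sum_C_mul_X_pow_sub_mem_rayIdeal {i₀ : σ} (hb₀ : b i₀ ≠ 0) (c : σ → K) :
    ∑ i, C (c i) * X i ^ d i - C ((∑ i, b i * c i) / b i₀) * X i₀ ^ d i₀ ∈ rayIdeal d b := by
  have key : ∑ i, C (c i / b i₀) * (C (b i₀) * X i ^ d i - C (b i) * X i₀ ^ d i₀) =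
      ∑ i, C (c i) * X i ^ d i - C ((∑ i, b i * c i) / b i₀) * X i₀ ^ d i₀ := by
    simp only [mul_sub, Finset.sum_sub_distrib, ← mul_assoc, ← C_mul, Finset.sum_div, map_sum,
      Finset.sum_mul]
    congr 1 <;> refine Finset.sum_congr rfl fun i _ => ?_ <;> congr 2 <;> field_simp
  rw [← key]
  exact sum_mem fun i _ => Ideal.mul_mem_left _ _ (Ideal.subset_span (Or.inr ⟨i, i₀, rfl⟩))

theorem sub_C_mul_X_pow_mem_rayIdeal (hd : ∀ i, 0 < d i) {i₀ : σ} (hb₀ : b i₀ ≠ 0)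
    {p : MvPolynomial σ K} (hp : p ∈ lowCoeffKer d) :
    p - C (rayTopCoeff d b p / b i₀) * X i₀ ^ d i₀ ∈ rayIdeal d b := by
  classical
  have : Nonempty σ := ⟨i₀⟩
  set c : σ → K := fun i => coeff (Finsupp.single i (d i)) p
  have hcoeff : ∀ l m, coeff (Finsupp.single l m) (∑ i, C (c i) * X i ^ d i) =
      if d l = m then c l else 0 := by
    intro l m
    rw [coeff_sum, Finset.sum_eq_single l]
    · simp [coeff_C_mul, coeff_single_X_pow_of_ne_zero (hd l).ne']
    · intro i _ hi
      rw [coeff_C_mul, coeff_single_X_pow_of_ne_zero (hd i).ne', if_neg (fun h => hi h.1), mul_zero]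
    · simp
  have hlow : p - ∑ i, C (c i) * X i ^ d i ∈ rayIdeal d b := by
    refine mem_rayIdeal_of_coeff_single_eq_zero fun l m hm => ?_
    rw [coeff_sub, hcoeff]
    rcases hm.lt_or_eq with hm | rfl
    · rw [if_neg hm.ne', mem_lowCoeffKer.mp hp l m hm, sub_zero]
    · rw [if_pos rfl, sub_self]
  have := add_mem hlow (sum_C_mul_X_pow_sub_mem_rayIdeal hb₀ c)
  rwa [sub_add_sub_cancel, ← rayTopCoeff_apply] at this

theorem mem_lowCoeffKer_of_forall_X_mul_mem (hd : ∀ i, 0 < d i) (hb : ∀ i, b i ≠ 0)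
    {p : MvPolynomial σ K} (hp : ∀ t, X t * p ∈ rayIdeal d b) : p ∈ lowCoeffKer d := by
  refine mem_lowCoeffKer.mpr fun i m hm => ?_
  obtain ⟨hlow, htop⟩ := mem_rayKer.mp (rayIdeal_le_rayKer hd (hp i))
  rcases (show m + 1 ≤ d i from hm).lt_or_eq with hm' | hm'
  · rw [← coeff_single_succ_X_mul]
    exact mem_lowCoeffKer.mp hlow i (m + 1) hm'
  · rw [rayTopCoeff_X_mul (hd i), ← hm', Nat.add_sub_cancel] at htop
    exact (mul_eq_zero.mp htop).resolve_left (hb i)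

theorem X_pow_notMem_rayIdeal (hd : ∀ i, 0 < d i) {i₀ : σ} (hb₀ : b i₀ ≠ 0) :
    X i₀ ^ d i₀ ∉ rayIdeal d b := fun h => by
  have htop := (mem_rayKer.mp (rayIdeal_le_rayKer hd h)).2
  rw [rayTopCoeff_X_pow i₀ (hd i₀).ne', if_pos rfl] at htop
  exact hb₀ htop

theorem annihilator_maximalIdeal_rayQuotient [IsLocalRing (MvPolynomial σ K ⧸ rayIdeal d b)]
    (hd : ∀ i, 0 < d i) (hb : ∀ i, b i ≠ 0) (i₀ : σ) :
    (IsLocalRing.maximalIdeal (MvPolynomial σ K ⧸ rayIdeal d b)).annihilator.restrictScalars K =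
      K ∙ Ideal.Quotient.mk (rayIdeal d b) (X i₀ ^ d i₀) := by
  have : Nonempty σ := ⟨i₀⟩
  ext a
  obtain ⟨p, rfl⟩ := Ideal.Quotient.mk_surjective a
  simp only [Submodule.restrictScalars_mem,
    mem_annihilator_maximalIdeal_quotient_iff (rayIdeal_le_idealOfVars hd),
    Submodule.mem_span_singleton, Ideal.Quotient.smul_mk_eq_mk_C_mul, ← map_mul,
    Ideal.Quotient.eq_zero_iff_mem]
  constructor
  · intro hp
    have hlow := mem_lowCoeffKer_of_forall_X_mul_mem hd hb fun t => mul_comm p (X t) ▸ hp t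
    refine ⟨rayTopCoeff d b p / b i₀, (Ideal.Quotient.eq.mpr ?_).symm⟩
    exact sub_C_mul_X_pow_mem_rayIdeal hd (hb i₀) hlow
  · rintro ⟨c, hc⟩ t
    rw [← Ideal.Quotient.eq_zero_iff_mem, map_mul, ← hc, ← map_mul, mul_assoc, map_mul,
      Ideal.Quotient.eq_zero_iff_mem.mpr (X_pow_mul_X_mem_rayIdeal (hd i₀) t), mul_zero]

end RayAlgebra

theorem ray_algebra_gorenstein_general
    (K : Type*) [Field K] (k : ℕ) (d : Fin (k + 1) → ℕ) (b : Fin (k + 1) → K)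
    (hd : ∀ i, 2 ≤ d i) (hb : ∀ i, b i ≠ 0)
    (I : Ideal (MvPolynomial (Fin (k + 1)) K))
    (hI : I = Ideal.span
      ({q | ∃ i j : Fin (k + 1), i ≠ j ∧ q = X i * X j} ∪
       {q | ∃ i : Fin (k + 1), q = X i ^ (d i + 1)} ∪
       {q | ∃ i j : Fin (k + 1), q = C (b j) * X i ^ d i - C (b i) * X j ^ d j})) :
    ∃ hloc : IsLocalRing (MvPolynomial (Fin (k + 1)) K ⧸ I),
      letI := hloc
      (IsLocalRing.maximalIdeal (MvPolynomial (Fin (k + 1)) K ⧸ I)).annihilator.restrictScalars K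
          = Submodule.span K {Ideal.Quotient.mk I (X 0 ^ d 0)} ∧
        Module.finrank K
          ((IsLocalRing.maximalIdeal
            (MvPolynomial (Fin (k + 1)) K ⧸ I)).annihilator.restrictScalars K) = 1 := by
  obtain rfl : I = rayIdeal d b := hI
  have hd₀ : ∀ i, 0 < d i := fun i => two_pos.trans_le (hd i)
  have := isLocalRing_rayQuotient (b := b) hd₀
  have hsocle := annihilator_maximalIdeal_rayQuotient hd₀ hb 0
  refine ⟨inferInstance, hsocle, ?_⟩
  rw [hsocle]
  exact finrank_span_singleton
    (Ideal.Quotient.eq_zero_iff_mem.not.mpr (X_pow_notMem_rayIdeal hd₀ (hb 0)))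

/-- For the Young diagram made of rays of lengths `d_1 ≥ … ≥ d_k ≥ 2` and nonzero scalars
`b_1,…,b_k`, the algebra
`A = K[x_1,…,x_k]/(x_i x_j (i≠j), x_i^{d_i+1}, b_j x_i^{d_i} − b_i x_j^{d_j})` is local,
and its socle (the annihilator of the maximal ideal) is one-dimensional, spanned by
`x_1^{d_1}`; i.e. `A` is Gorenstein. -/
theorem ray_algebra_gorenstein
    (K : Type*) [Field K] [CharZero K] (k : ℕ) (d : Fin (k + 1) → ℕ) (b : Fin (k + 1) → K)
    (hsort : ∀ i j : Fin (k + 1), i ≤ j → d j ≤ d i)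
    (hd : ∀ i, 2 ≤ d i) (hb : ∀ i, b i ≠ 0)
    (I : Ideal (MvPolynomial (Fin (k + 1)) K))
    (hI : I = Ideal.span
      ({q | ∃ i j : Fin (k + 1), i ≠ j ∧ q = X i * X j} ∪
       {q | ∃ i : Fin (k + 1), q = X i ^ (d i + 1)} ∪
       {q | ∃ i j : Fin (k + 1), q = C (b j) * X i ^ d i - C (b i) * X j ^ d j})) :
    ∃ hloc : IsLocalRing (MvPolynomial (Fin (k + 1)) K ⧸ I),
      letI := hloc
      (IsLocalRing.maximalIdeal (MvPolynomial (Fin (k + 1)) K ⧸ I)).annihilator.restrictScalars K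
          = Submodule.span K {Ideal.Quotient.mk I (X 0 ^ d 0)} ∧
        Module.finrank K
          ((IsLocalRing.maximalIdeal
            (MvPolynomial (Fin (k + 1)) K ⧸ I)).annihilator.restrictScalars K) = 1 :=
  ray_algebra_gorenstein_general K k d b hd hb I hI
end

section
/- Let d_1 ≥ 2 and consider the homogeneous polynomials in variables z_1,…,z_k and z_ν (ν of degree-2 multi-indices): f_d = ((−1)^{d−1}/d) Σ_{i: d_i = d} b_i z_i^d and f_{d−1} = ((−1)^{d−2}/(d−1)) Σ_{i: d_i = d−1} b_i z_i^{d−1} + (−1)^{d−2} b_1 z_{2e_1} z_1^{d−2}, where d = d_1 = max d_i, all b_i ≠ 0, and d_1 = d only for i = 1. Then the squarefree-reduced polynomial of f_d (which is a scalar times z_1^{d−1}) is coprime to f_{d−1} if and only if d = 2 or some d_i equals d−1 for i ≥ 2. -/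
open MvPolynomial

/-!
Up to a unit, `f̃_d` is the power `z_1^{d-1}` of the prime `z_1`, so `f̃_d` and `f_{d-1}` are
coprime exactly when `z_1 ∤ f_{d-1}`. The term `b_1 z_{2e_1} z_1^{d-2}` is divisible by `z_1`
unless `d = 2`, in which case it is a unit times `z_{2e_1}` and the other sum is empty; the
remaining sum `Σ b_i z_i^{d-1}` avoids `z_1` and has nonzero coefficients, so `z_1` divides it
only when it is empty, i.e. when no `d_i` with `i ≥ 2` equals `d - 1`.
-/

theorem coprime_unit_mul_prime_pow_iff_not_dvd {M : Type*} [CommMonoidWithZero M]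
    [IsCancelMulZero M] {p u f : M} (hp : Prime p) (hu : IsUnit u) {n : ℕ} (hn : n ≠ 0) :
    (∀ q, q ∣ u * p ^ n → q ∣ f → IsUnit q) ↔ ¬ p ∣ f := by
  simp only [hu.dvd_mul_left]
  constructor
  · exact fun hcop hpf => hp.not_isUnit (hcop p (dvd_pow_self p hn) hpf)
  · intro hpf q hq hqf
    obtain ⟨i, -, hassoc⟩ := (dvd_prime_pow hp n).mp hq
    rcases Nat.eq_zero_or_pos i with rfl | hi
    · exact associated_one_iff_isUnit.mp (by simpa using hassoc)
    · exact absurd ((dvd_pow_self p hi.ne').trans (hassoc.symm.dvd.trans hqf)) hpf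

namespace MvPolynomial

variable {σ R : Type*}

theorem coeff_eq_zero_of_X_dvd [CommSemiring R] {s : σ} {p : MvPolynomial σ R} (h : X s ∣ p)
    {m : σ →₀ ℕ} (hm : m s = 0) : coeff m p = 0 := by
  classical
  obtain ⟨r, rfl⟩ := h
  rw [coeff_X_mul', if_neg]
  simp [Finsupp.mem_support_iff, hm]

theorem coeff_single_sum_C_mul_X_pow [CommSemiring R] {ι : Type*} {v : ι → σ}
    (hv : Function.Injective v) (s : Finset ι) (b : ι → R) {n : ℕ} (hn : n ≠ 0) {j : ι}
    (hj : j ∈ s) :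
    coeff (Finsupp.single (v j) n) (∑ i ∈ s, C (b i) * X (v i) ^ n) = b j := by
  classical
  rw [coeff_sum, Finset.sum_eq_single_of_mem j hj]
  · simp [coeff_C_mul, coeff_X_pow]
  · intro i _ hij
    rw [coeff_C_mul, coeff_X_pow, if_neg, mul_zero]
    exact fun h => hij (hv (Finsupp.single_left_injective hn h))

theorem X_dvd_sum_C_mul_X_pow_iff [CommSemiring R] {ι : Type*} {v : ι → σ}
    (hv : Function.Injective v) {t : σ} {s : Finset ι} (ht : ∀ i ∈ s, v i ≠ t) (b : ι → R)
    {n : ℕ} (hn : n ≠ 0) :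
    X t ∣ ∑ i ∈ s, C (b i) * X (v i) ^ n ↔ ∀ i ∈ s, b i = 0 := by
  constructor
  · intro h j hj
    rw [← coeff_single_sum_C_mul_X_pow hv s b hn hj]
    exact coeff_eq_zero_of_X_dvd h (Finsupp.single_eq_of_ne (ht j hj).symm)
  · intro h
    rw [Finset.sum_eq_zero fun i hi => by rw [h i hi, C_0, zero_mul]]
    exact dvd_zero _

end MvPolynomial

/-- `X none` is `z_{2e_1}` and `X (some i)` is `z_{i+1}`. -/
theorem ray_hypersurface_normality_criterion_general
    (K : Type*) [Field K] [CharZero K] (k : ℕ)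
    (dd : Fin (k + 1) → ℕ) (b : Fin (k + 1) → K) (d : ℕ) (hdd : d = dd 0)
    (hd2 : ∀ i, 2 ≤ dd i) (hb : ∀ i, b i ≠ 0)
    (ftd fd1 : MvPolynomial (Option (Fin (k + 1))) K)
    (hftd : ftd = C ((-1 : K) ^ (d - 1) / (d : K) * b 0) * X (Option.some 0) ^ (d - 1))
    (hfd1 : fd1 =
      C ((-1 : K) ^ (d - 2) / ((d - 1 : ℕ) : K)) *
        (∑ i ∈ Finset.univ.filter (fun i : Fin (k + 1) => dd i = d - 1),
          C (b i) * X (Option.some i) ^ (d - 1)) +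
      C ((-1 : K) ^ (d - 2) * b 0) * X Option.none * X (Option.some 0) ^ (d - 2)) :
    (∀ q : MvPolynomial (Option (Fin (k + 1))) K, q ∣ ftd → q ∣ fd1 → IsUnit q) ↔
      (d = 2 ∨ ∃ i : Fin (k + 1), i ≠ 0 ∧ dd i = d - 1) := by
  have hd : 2 ≤ d := hdd ▸ hd2 0
  have hX0 : Prime (X (some 0) : MvPolynomial (Option (Fin (k + 1))) K) := X_prime
  have hC (c : K) (hc : c ≠ 0) : IsUnit (C c : MvPolynomial (Option (Fin (k + 1))) K) :=
    hc.isUnit.map C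
  rw [hftd, coprime_unit_mul_prime_pow_iff_not_dvd hX0 (hC _ (by simp [hb 0]; omega))
    (by omega), hfd1]
  rcases hd.eq_or_lt with rfl | hd3
  · have hempty : Finset.univ.filter (fun i : Fin (k + 1) => dd i = 2 - 1) = ∅ :=
      Finset.filter_eq_empty_iff.mpr fun i _ => by have := hd2 i; omega
    simp only [hempty, Finset.sum_empty, mul_zero, zero_add, Nat.sub_self, pow_zero, mul_one,
      true_or, iff_true, hX0.dvd_mul, X_dvd_X, reduceCtorEq, or_false]
    exact fun h => hX0.not_isUnit (isUnit_of_dvd_unit h (hC _ (by simp [hb 0])))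
  · have hS : ∀ i ∈ Finset.univ.filter (fun i : Fin (k + 1) => dd i = d - 1), some i ≠ some 0 :=
      fun i hi h => by
        rw [Finset.mem_filter, Option.some_inj.mp h, ← hdd] at hi
        omega
    rw [dvd_add_left (dvd_mul_of_dvd_right (dvd_pow_self _ (by omega : d - 2 ≠ 0)) _),
      (hC _ (by simp; omega)).dvd_mul_left,
      X_dvd_sum_C_mul_X_pow_iff (Option.some_injective _) hS b (by omega)]
    simp only [Finset.mem_filter, Finset.mem_univ, true_and, hb, imp_false, not_forall,
      not_not, hd3.ne', false_or]
    exact ⟨fun ⟨i, hi⟩ => ⟨i, fun h => by subst h; omega, hi⟩, fun ⟨i, _, hi⟩ => ⟨i, hi⟩⟩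

/-- For the ray diagram data `d_1 ≥ … ≥ d_k ≥ 2` with `d := d_1` attained only at `i = 1`
and nonzero scalars `b_i`, set
`f_d = ((−1)^{d−1}/d) Σ_{i : d_i = d} b_i z_i^d` (a scalar times `z_1^d`), with squarefree
reduction `f̃_d` a scalar times `z_1^{d−1}`, and
`f_{d−1} = ((−1)^{d−2}/(d−1)) Σ_{i : d_i = d−1} b_i z_i^{d−1} + (−1)^{d−2} b_1 z_{2e_1} z_1^{d−2}`.
Then `f̃_d` and `f_{d−1}` are coprime (no common non-unit divisor) if and only if `d = 2` or
some `d_i` with `i ≥ 2` equals `d − 1`. Here the variable `X none` plays the role of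
`z_{2e_1}` and `X (some i)` the role of `z_{i+1}`. -/
theorem ray_hypersurface_normality_criterion
    (K : Type*) [Field K] [IsAlgClosed K] [CharZero K] (k : ℕ)
    (dd : Fin (k + 1) → ℕ) (b : Fin (k + 1) → K) (d : ℕ) (hdd : d = dd 0)
    (hsort : ∀ i j : Fin (k + 1), i ≤ j → dd j ≤ dd i)
    (hd2 : ∀ i, 2 ≤ dd i) (hb : ∀ i, b i ≠ 0)
    (hmax : ∀ i : Fin (k + 1), i ≠ 0 → dd i < d)
    (ftd fd1 : MvPolynomial (Option (Fin (k + 1))) K)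
    (hftd : ftd = C ((-1 : K) ^ (d - 1) / (d : K) * b 0) * X (Option.some 0) ^ (d - 1))
    (hfd1 : fd1 =
      C ((-1 : K) ^ (d - 2) / ((d - 1 : ℕ) : K)) *
        (∑ i ∈ Finset.univ.filter (fun i : Fin (k + 1) => dd i = d - 1),
          C (b i) * X (Option.some i) ^ (d - 1)) +
      C ((-1 : K) ^ (d - 2) * b 0) * X Option.none * X (Option.some 0) ^ (d - 2)) :
    (∀ q : MvPolynomial (Option (Fin (k + 1))) K, q ∣ ftd → q ∣ fd1 → IsUnit q) ↔
      (d = 2 ∨ ∃ i : Fin (k + 1), i ≠ 0 ∧ dd i = d - 1) :=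
  ray_hypersurface_normality_criterion_general K k dd b d hdd hd2 hb ftd fd1 hftd hfd1
end

section
/- Let f_d = c · z^μ be a nonzero monomial (c ≠ 0, μ ∈ Z_{≥0}^k with all μ_i ≥ 1) and f_{d−1} = Σ_{|ν|=2, ν ≼ μ} c_{μ−ν} b z_ν z^{μ−ν} with b ≠ 0 and multinomial coefficients c_{μ−ν} ≠ 0, where the z_ν (|ν|=2) are independent new variables. Then z_i divides f_{d−1} for some 1 ≤ i ≤ k if and only if μ_i ≥ 3 for that i; in particular, if all μ_i ≤ 2 and k ≥ 2 or μ_1 = 2, then f_{d−1} and the squarefree reduction of f_d are coprime. -/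
/-!
Differentiating `f_{d-1}` in `z_ν` isolates the single term `c_{μ-ν} b z^{μ-ν}`, and `z_i` divides
`f_{d-1}` only if it divides every such derivative. If `μ_i ≤ 2` there is a `ν` with `|ν| = 2` and
`ν_i = μ_i`, so `z_i` does not divide that term; if `μ_i ≥ 3` it divides every term, since `ν_i ≤ 2`.
For coprimality, a prime factor of the monomial `f̃_d` is associated to some `z_i`, which would then
divide `f_{d-1}`.
-/

open MvPolynomial

namespace MvPolynomial

section CommSemiring

variable {R σ ι : Type*} [CommSemiring R]

theorem pderiv_prod_X_pow_of_ne (s : Finset ι) (f : ι → σ) (e : ι → ℕ) {i : σ}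
    (h : ∀ j ∈ s, f j ≠ i) : pderiv i (∏ j ∈ s, (X (f j) : MvPolynomial σ R) ^ e j) = 0 :=
  Finset.prod_induction _ (fun p => pderiv i p = 0)
    (fun p q hp hq => by rw [pderiv_mul, hp, hq, mul_zero, zero_mul, add_zero])
    pderiv_one
    (fun j hj => by rw [pderiv_pow, pderiv_X_of_ne (h j hj), mul_zero])

theorem X_dvd_pderiv_of_X_dvd {i j : σ} (hij : i ≠ j) {p : MvPolynomial σ R} (h : X i ∣ p) :
    X i ∣ pderiv j p := by
  obtain ⟨q, rfl⟩ := h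
  rw [pderiv_mul, pderiv_X_of_ne hij, zero_mul, zero_add]
  exact dvd_mul_right _ _

end CommSemiring

variable {R σ ι : Type*} [CommRing R] [IsDomain R]

theorem X_dvd_prod_X_pow_iff [Fintype ι] {f : ι → σ} (hf : f.Injective) (e : ι → ℕ) (i : ι) :
    (X (f i) : MvPolynomial σ R) ∣ ∏ j, X (f j) ^ e j ↔ e i ≠ 0 := by
  refine ⟨fun h => ?_,
    fun h => (dvd_pow_self _ h).trans (Finset.dvd_prod_of_mem _ (Finset.mem_univ i))⟩
  obtain ⟨j, -, hj⟩ := X_prime.exists_mem_finset_dvd h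
  by_cases h0 : e j = 0
  · rw [h0, pow_zero] at hj
    exact absurd (isUnit_of_dvd_one hj) X_prime.not_isUnit
  · rwa [hf (X_dvd_X.mp (X_prime.dvd_of_dvd_pow hj))]

theorem X_dvd_C_mul_prod_X_pow_iff [Fintype ι] {f : ι → σ} (hf : f.Injective) {a : R}
    (ha : a ≠ 0) (e : ι → ℕ) (i : ι) :
    (X (f i) : MvPolynomial σ R) ∣ C a * ∏ j, X (f j) ^ e j ↔ e i ≠ 0 := by
  rw [X_prime.dvd_mul, X_dvd_prod_X_pow_iff hf, C_apply, X_dvd_monomial]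
  simp [ha]

theorem exists_X_dvd_of_prime_dvd_prod_X_pow {p : MvPolynomial σ R} (hp : Prime p)
    {s : Finset ι} {f : ι → σ} {e : ι → ℕ} (h : p ∣ ∏ j ∈ s, X (f j) ^ e j) :
    ∃ j ∈ s, X (f j) ∣ p := by
  obtain ⟨j, hj, hpj⟩ := hp.exists_mem_finset_dvd h
  exact ⟨j, hj, hp.irreducible.dvd_symm X_prime.irreducible (hp.dvd_of_dvd_pow hpj)⟩

theorem isUnit_of_dvd_C_mul_prod_X_pow {K : Type*} [Field K] {q g : MvPolynomial σ K} {c : K}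
    (hc : c ≠ 0) {s : Finset ι} {f : ι → σ} {e : ι → ℕ} (hg : ∀ j ∈ s, ¬ X (f j) ∣ g)
    (hqm : q ∣ C c * ∏ j ∈ s, X (f j) ^ e j) (hqg : q ∣ g) : IsUnit q := by
  rw [((isUnit_iff_ne_zero.mpr hc).map C).dvd_mul_left] at hqm
  by_contra hq
  have hm : ∏ j ∈ s, (X (f j) : MvPolynomial σ K) ^ e j ≠ 0 :=
    Finset.prod_ne_zero_iff.mpr fun j _ => pow_ne_zero _ (X_ne_zero _)
  obtain ⟨p, hp, hpq⟩ :=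
    WfDvdMonoid.exists_irreducible_factor hq (ne_zero_of_dvd_ne_zero hm hqm)
  obtain ⟨j, hj, hXp⟩ := exists_X_dvd_of_prime_dvd_prod_X_pow hp.prime (hpq.trans hqm)
  exact hg j hj (hXp.trans (hpq.trans hqg))

end MvPolynomial

theorem Finsupp.exists_le_degree_eq_two_apply_eq {ι : Type*} {μ : ι →₀ ℕ} {i : ι}
    (h1 : 1 ≤ μ i) (h2 : μ i ≤ 2) (hd : 2 ≤ degree μ) :
    ∃ ν ≤ μ, degree ν = 2 ∧ ν i = μ i := by
  obtain hi | hi : μ i = 2 ∨ μ i = 1 := by omega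
  · exact ⟨single i 2, single_le_iff.mpr hi.ge, degree_single _ _, by simp [hi]⟩
  · obtain ⟨j, hji, hj⟩ : ∃ j ≠ i, μ j ≠ 0 := by
      by_contra! h
      have : degree μ = μ i := by
        rw [degree_apply, Finset.sum_eq_single i (fun j _ hji => h j hji) (by simp)]
      omega
    refine ⟨single i 1 + single j 1, fun x => ?_, by simp, by simp [hji, hi]⟩
    by_cases hxi : x = i <;> by_cases hxj : x = j <;> simp [hxi, hxj, hji, hi]
    all_goals omega

section SubleadingForm

variable {R ι : Type*} [CommRing R] [Fintype ι] [DecidableEq ι]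

/-- The form `f_{d-1}` of the paper, with `z_i = X (Sum.inl i)` and `z_ν = X (Sum.inr ν)`. -/
noncomputable def subleadingForm (μ : ι →₀ ℕ) (b : R) : MvPolynomial (ι ⊕ (ι →₀ ℕ)) R :=
  ∑ ν ∈ (Finset.Iic μ).filter (fun ν => (ν.sum fun _ m => m) = 2),
    C ((Nat.multinomial Finset.univ ⇑(μ - ν) : R) * b) * X (Sum.inr ν) *
      ∏ j, X (Sum.inl j) ^ ((μ - ν) j)

theorem pderiv_inr_subleadingForm {μ ν : ι →₀ ℕ} (hν : ν ≤ μ) (hν2 : Finsupp.degree ν = 2)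
    (b : R) :
    pderiv (Sum.inr ν) (subleadingForm μ b) =
      C ((Nat.multinomial Finset.univ ⇑(μ - ν) : R) * b) * ∏ j, X (Sum.inl j) ^ ((μ - ν) j) := by
  have hprod (ν' : ι →₀ ℕ) :
      pderiv (Sum.inr ν) (∏ j, (X (Sum.inl j) : MvPolynomial _ R) ^ ((μ - ν') j)) = 0 :=
    pderiv_prod_X_pow_of_ne _ _ _ fun _ _ => Sum.inl_ne_inr
  rw [subleadingForm, map_sum, Finset.sum_eq_single_of_mem ν (by simpa using ⟨hν, hν2⟩)]
  · rw [pderiv_mul, hprod, pderiv_C_mul, pderiv_X_self]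
    ring
  · intro ν' _ hne
    rw [pderiv_mul, hprod, pderiv_C_mul, pderiv_X_of_ne (Sum.inr_injective.ne hne)]
    ring

theorem X_inl_dvd_subleadingForm_iff [IsDomain R] [CharZero R] {μ : ι →₀ ℕ}
    (hd : 2 ≤ Finsupp.degree μ) {b : R} (hb : b ≠ 0) {i : ι} (hi : 1 ≤ μ i) :
    X (Sum.inl i) ∣ subleadingForm μ b ↔ 3 ≤ μ i := by
  constructor
  · intro h
    by_contra! hi3
    obtain ⟨ν, hν, hν2, hνi⟩ := Finsupp.exists_le_degree_eq_two_apply_eq hi (by omega) hd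
    have hdvd := X_dvd_pderiv_of_X_dvd Sum.inl_ne_inr h (j := Sum.inr ν)
    have hcoeff : (Nat.multinomial Finset.univ ⇑(μ - ν) : R) * b ≠ 0 :=
      mul_ne_zero (Nat.cast_ne_zero.mpr (Nat.multinomial_pos _ _).ne') hb
    rw [pderiv_inr_subleadingForm hν hν2, X_dvd_C_mul_prod_X_pow_iff Sum.inl_injective hcoeff,
      Finsupp.tsub_apply] at hdvd
    omega
  · intro h
    refine Finset.dvd_sum fun ν hν => dvd_mul_of_dvd_right
      ((X_dvd_prod_X_pow_iff Sum.inl_injective _ _).mpr ?_) _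
    have hν2 : Finsupp.degree ν = 2 := (Finset.mem_filter.mp hν).2
    have := Finsupp.le_degree i ν
    rw [Finsupp.tsub_apply]
    omega

end SubleadingForm

/-- Let `f_d = c·z^μ` be a nonzero monomial with all `μ_i ≥ 1` and `d = |μ| ≥ 2`, with
squarefree reduction `f̃_d = c·z^{μ−(1,…,1)}`, and let
`f_{d−1} = Σ_{|ν|=2, ν ≼ μ} c_{μ−ν} b z_ν z^{μ−ν}` with `b ≠ 0`, where the `z_ν` are new
independent variables (`X (Sum.inr ν)`) and `c_λ` are multinomial coefficients. Then
`z_i ∣ f_{d−1}` iff `μ_i ≥ 3`; in particular, if all `μ_i ≤ 2` (and `k ≥ 2` or `μ_1 = 2`),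
then `f_{d−1}` and `f̃_d` are coprime (no common non-unit divisor). -/
theorem parallelepiped_normality_criterion
    (K : Type*) [Field K] [CharZero K] (k : ℕ) (μ : Fin k →₀ ℕ)
    (hμ : ∀ i, 1 ≤ μ i) (hd : 2 ≤ μ.sum fun _ m => m)
    (b c : K) (hb : b ≠ 0) (hc : c ≠ 0)
    (ftd fd1 : MvPolynomial (Fin k ⊕ (Fin k →₀ ℕ)) K)
    (hftd : ftd = C c * ∏ j, X (Sum.inl j) ^ (μ j - 1))
    (hfd1 : fd1 = ∑ ν ∈ (Finset.Iic μ).filter (fun ν => (ν.sum fun _ m => m) = 2),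
      C ((Nat.multinomial Finset.univ ⇑(μ - ν) : K) * b) * X (Sum.inr ν) *
        ∏ j, X (Sum.inl j) ^ ((μ - ν) j)) :
    (∀ i : Fin k, X (Sum.inl i) ∣ fd1 ↔ 3 ≤ μ i) ∧
    ((∀ i, μ i ≤ 2) → (2 ≤ k ∨ ∃ i, μ i = 2) →
      ∀ q : MvPolynomial (Fin k ⊕ (Fin k →₀ ℕ)) K, q ∣ ftd → q ∣ fd1 → IsUnit q) := by
  have hdvd (i : Fin k) : X (Sum.inl i) ∣ fd1 ↔ 3 ≤ μ i := by
    rw [hfd1]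
    exact X_inl_dvd_subleadingForm_iff hd hb (hμ i)
  refine ⟨hdvd, fun hμ2 _ q hqf hqg => ?_⟩
  rw [hftd] at hqf
  exact isUnit_of_dvd_C_mul_prod_X_pow hc (fun j _ h => (hμ2 j).not_gt ((hdvd j).mp h)) hqf hqg
end
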